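/- arXiv:1310.0284 — 7 statements merged into one kernel-verified Lean document; each statement's English description precedes it below -/
import Mathlib

section
/- Entropic CHSH inequality: for any four jointly distributed discrete random variables $A_0,A_1,B_0,B_1$, the Shannon entropies satisfy $H(A_0,B_0)+H(A_0,B_1)+H(A_1,B_0)-H(A_1,B_1)-H(A_0)-H(B_0)\geq 0$. -/
open Finset

/-- Shannon entropy of a discrete random variable `X` on a finite probability
space with weights `p`. -/
noncomputable def shannonEntropy {Ω α : Type*} [Fintype Ω] [Fintype α] [DecidableEq α]
    (p : Ω → ℝ) (X : Ω → α) : ℝ :=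
  ∑ x : α, Real.negMulLog (∑ ω ∈ Finset.univ.filter (fun ω => X ω = x), p ω)

namespace CHSHaux

variable {Ω : Type*} [Fintype Ω]

/-- The distribution (pushforward of `p`) of `X`. -/
noncomputable def dst {β : Type*} [Fintype β] [DecidableEq β] (p : Ω → ℝ) (X : Ω → β)
    (x : β) : ℝ :=
  ∑ ω ∈ Finset.univ.filter (fun ω => X ω = x), p ω

lemma shannon_eq_dst {β : Type*} [Fintype β] [DecidableEq β] (p : Ω → ℝ) (X : Ω → β) :
    shannonEntropy p X = ∑ x, Real.negMulLog (dst p X x) := rfl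

lemma dst_nonneg {β : Type*} [Fintype β] [DecidableEq β] {p : Ω → ℝ} (hp : ∀ ω, 0 ≤ p ω)
    (X : Ω → β) (x : β) : 0 ≤ dst p X x :=
  Finset.sum_nonneg fun ω _ => hp ω

lemma p_le_dst {β : Type*} [Fintype β] [DecidableEq β] {p : Ω → ℝ} (hp : ∀ ω, 0 ≤ p ω)
    (X : Ω → β) (ω : Ω) : p ω ≤ dst p X (X ω) :=
  Finset.single_le_sum (fun i _ => hp i) (by simp)

/-- Grouping a sum over `Ω` by the fibers of `X`. -/
lemma sum_mul_comp {β : Type*} [Fintype β] [DecidableEq β] (p : Ω → ℝ) (X : Ω → β)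
    (f : β → ℝ) : ∑ ω, p ω * f (X ω) = ∑ x, dst p X x * f x := by
  rw [← Finset.sum_fiberwise Finset.univ X (fun ω => p ω * f (X ω))]
  refine Finset.sum_congr rfl fun x _ => ?_
  rw [dst, Finset.sum_mul]
  refine Finset.sum_congr rfl fun ω hω => ?_
  rw [Finset.mem_filter] at hω
  rw [hω.2]

/-- Pull the entropy back to a sum over `Ω`. -/
lemma shannon_eq_sum_log {β : Type*} [Fintype β] [DecidableEq β] (p : Ω → ℝ) (X : Ω → β) :
    shannonEntropy p X = -∑ ω, p ω * Real.log (dst p X (X ω)) := by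
  rw [sum_mul_comp p X (fun x => Real.log (dst p X x)), shannon_eq_dst]
  rw [← Finset.sum_neg_distrib]
  exact Finset.sum_congr rfl fun x _ => by rw [Real.negMulLog]; ring

lemma negMulLog_sum_le {ι : Type*} (s : Finset ι) (a : ι → ℝ) (ha : ∀ i ∈ s, 0 ≤ a i) :
    Real.negMulLog (∑ i ∈ s, a i) ≤ ∑ i ∈ s, Real.negMulLog (a i) := by
  have hS : Real.negMulLog (∑ i ∈ s, a i) =
      ∑ i ∈ s, -(a i * Real.log (∑ j ∈ s, a j)) := by
    rw [Real.negMulLog, neg_mul, Finset.sum_mul, ← Finset.sum_neg_distrib]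
  rw [hS]
  refine Finset.sum_le_sum fun i hi => ?_
  rw [Real.negMulLog, neg_mul, neg_le_neg_iff]
  rcases eq_or_lt_of_le (ha i hi) with h | h
  · simp [← h]
  · exact mul_le_mul_of_nonneg_left
      (Real.log_le_log h (Finset.single_le_sum ha hi)) h.le

lemma dst_comp {β γ : Type*} [Fintype β] [DecidableEq β] [Fintype γ] [DecidableEq γ]
    (p : Ω → ℝ) (X : Ω → β) (f : β → γ) (y : γ) :
    dst p (fun ω => f (X ω)) y = ∑ x ∈ Finset.univ.filter (fun x => f x = y), dst p X x := by
  rw [show (∑ x ∈ Finset.univ.filter (fun x => f x = y), dst p X x) =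
      ∑ x ∈ Finset.univ.filter (fun x => f x = y),
        ∑ ω ∈ Finset.univ.filter (fun ω => X ω = x), p ω from rfl]
  rw [Finset.sum_fiberwise_eq_sum_filter Finset.univ
    (Finset.univ.filter (fun x => f x = y)) X p]
  rw [dst]
  congr 1
  ext ω
  simp

/-- Monotonicity: the entropy of a function of `X` is at most the entropy of `X`. -/
lemma ent_comp_le {β γ : Type*} [Fintype β] [DecidableEq β] [Fintype γ] [DecidableEq γ]
    (p : Ω → ℝ) (hp : ∀ ω, 0 ≤ p ω) (X : Ω → β) (f : β → γ) :
    shannonEntropy p (fun ω => f (X ω)) ≤ shannonEntropy p X := by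
  rw [shannon_eq_dst, shannon_eq_dst p X]
  calc ∑ y, Real.negMulLog (dst p (fun ω => f (X ω)) y)
      ≤ ∑ y, ∑ x ∈ Finset.univ.filter (fun x => f x = y), Real.negMulLog (dst p X x) := by
        refine Finset.sum_le_sum fun y _ => ?_
        rw [dst_comp]
        exact negMulLog_sum_le _ _ fun x _ => dst_nonneg hp X x
    _ = ∑ x, Real.negMulLog (dst p X x) :=
        Finset.sum_fiberwise Finset.univ f (fun x => Real.negMulLog (dst p X x))

/-- Marginalizing out the first coordinate. -/
lemma dst_marginal {β δ : Type*} [Fintype β] [DecidableEq β] [Fintype δ] [DecidableEq δ]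
    (p : Ω → ℝ) (X : Ω → β) (Z : Ω → δ) (z : δ) :
    ∑ x, dst p (fun ω => (X ω, Z ω)) (x, z) = dst p Z z := by
  have h : ∀ x : β, Finset.univ.filter (fun ω => (X ω, Z ω) = (x, z)) =
      (Finset.univ.filter (fun ω => Z ω = z)).filter (fun ω => X ω = x) := by
    intro x
    ext ω
    simp only [Finset.mem_filter, Finset.mem_univ, true_and, Prod.mk.injEq]
    tauto
  simp only [dst, h]
  exact Finset.sum_fiberwise (Finset.univ.filter (fun ω => Z ω = z)) X p

/-- Submodularity of entropy. -/
lemma submod {β γ δ : Type*} [Fintype β] [DecidableEq β] [Fintype γ] [DecidableEq γ]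
    [Fintype δ] [DecidableEq δ]
    (p : Ω → ℝ) (hp : ∀ ω, 0 ≤ p ω) (hsum : ∑ ω, p ω = 1)
    (X : Ω → β) (Y : Ω → γ) (Z : Ω → δ) :
    shannonEntropy p (fun ω => (X ω, Y ω, Z ω)) + shannonEntropy p Z ≤
      shannonEntropy p (fun ω => (X ω, Z ω)) + shannonEntropy p (fun ω => (Y ω, Z ω)) := by
  classical
  have ea : shannonEntropy p (fun ω => (X ω, Z ω)) =
      -∑ ω, p ω * Real.log (dst p (fun ω => (X ω, Z ω)) (X ω, Z ω)) :=
    shannon_eq_sum_log p _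
  have eb : shannonEntropy p (fun ω => (Y ω, Z ω)) =
      -∑ ω, p ω * Real.log (dst p (fun ω => (Y ω, Z ω)) (Y ω, Z ω)) :=
    shannon_eq_sum_log p _
  have ec : shannonEntropy p (fun ω => (X ω, Y ω, Z ω)) =
      -∑ ω, p ω * Real.log (dst p (fun ω => (X ω, Y ω, Z ω)) (X ω, Y ω, Z ω)) :=
    shannon_eq_sum_log p _
  have ed : shannonEntropy p Z = -∑ ω, p ω * Real.log (dst p Z (Z ω)) :=
    shannon_eq_sum_log p _
  -- the key quantity
  set g : β × γ × δ → ℝ := fun w =>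
    dst p (fun ω => (X ω, Z ω)) (w.1, w.2.2) * dst p (fun ω => (Y ω, Z ω)) (w.2.1, w.2.2) /
      (dst p (fun ω => (X ω, Y ω, Z ω)) w * dst p Z w.2.2) with hg
  have hgnonneg : ∀ w, 0 ≤ g w := by
    intro w
    exact div_nonneg (mul_nonneg (dst_nonneg hp _ _) (dst_nonneg hp _ _))
      (mul_nonneg (dst_nonneg hp _ _) (dst_nonneg hp _ _))
  set s : Finset Ω := Finset.univ.filter (fun ω => 0 < p ω) with hsdef
  have hpzero : ∀ ω, ω ∉ s → p ω = 0 := by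
    intro ω hω
    rw [hsdef] at hω
    simp only [Finset.mem_filter, Finset.mem_univ, true_and] at hω
    exact le_antisymm (not_lt.1 hω) (hp ω)
  have hwsum : ∑ ω ∈ s, p ω = 1 := by
    rw [← hsum]
    exact Finset.sum_subset (Finset.filter_subset _ _)
      (fun ω _ hω => hpzero ω hω)
  -- positivity of the four distributions on s
  have hpos : ∀ ω ∈ s, 0 < p ω := by
    intro ω hω
    rw [hsdef] at hω
    simp only [Finset.mem_filter, Finset.mem_univ, true_and] at hω
    exact hω
  have hA : ∀ ω ∈ s, 0 < dst p (fun ω => (X ω, Z ω)) (X ω, Z ω) := fun ω hω =>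
    lt_of_lt_of_le (hpos ω hω) (p_le_dst hp _ ω)
  have hB : ∀ ω ∈ s, 0 < dst p (fun ω => (Y ω, Z ω)) (Y ω, Z ω) := fun ω hω =>
    lt_of_lt_of_le (hpos ω hω) (p_le_dst hp _ ω)
  have hC : ∀ ω ∈ s, 0 < dst p (fun ω => (X ω, Y ω, Z ω)) (X ω, Y ω, Z ω) := fun ω hω =>
    lt_of_lt_of_le (hpos ω hω) (p_le_dst hp _ ω)
  have hD : ∀ ω ∈ s, 0 < dst p Z (Z ω) := fun ω hω =>
    lt_of_lt_of_le (hpos ω hω) (p_le_dst hp _ ω)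
  have hgpos : ∀ ω ∈ s, g (X ω, Y ω, Z ω) ∈ Set.Ioi (0 : ℝ) := by
    intro ω hω
    exact div_pos (mul_pos (hA ω hω) (hB ω hω)) (mul_pos (hC ω hω) (hD ω hω))
  -- Jensen's inequality
  have jensen :=
    (strictConcaveOn_log_Ioi.concaveOn).le_map_sum (t := s) (w := p)
      (p := fun ω => g (X ω, Y ω, Z ω)) (fun ω _ => hp ω) hwsum hgpos
  -- the average of g is at most 1
  have havg : ∑ ω ∈ s, p ω • g (X ω, Y ω, Z ω) ≤ 1 := by
    have h1 : ∑ ω ∈ s, p ω • g (X ω, Y ω, Z ω) = ∑ ω, p ω * g (X ω, Y ω, Z ω) := by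
      refine Finset.sum_subset (Finset.filter_subset _ _) fun ω _ hω => ?_
      rw [hpzero ω hω]; simp
    have h2 : ∑ ω, p ω * g (X ω, Y ω, Z ω) =
        ∑ w, dst p (fun ω => (X ω, Y ω, Z ω)) w * g w :=
      sum_mul_comp p (fun ω => (X ω, Y ω, Z ω)) g
    have h3 : ∑ w, dst p (fun ω => (X ω, Y ω, Z ω)) w * g w ≤
        ∑ w : β × γ × δ, dst p (fun ω => (X ω, Z ω)) (w.1, w.2.2) *
          dst p (fun ω => (Y ω, Z ω)) (w.2.1, w.2.2) / dst p Z w.2.2 := by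
      refine Finset.sum_le_sum fun w _ => ?_
      rcases eq_or_ne (dst p (fun ω => (X ω, Y ω, Z ω)) w) 0 with h | h
      · rw [h, zero_mul]
        exact div_nonneg (mul_nonneg (dst_nonneg hp _ _) (dst_nonneg hp _ _))
          (dst_nonneg hp _ _)
      · rcases eq_or_ne (dst p Z w.2.2) 0 with hd | hd
        · rw [hg]
          simp [hd]
        · rw [hg]
          refine le_of_eq ?_
          field_simp
    have h4 : ∑ w : β × γ × δ, dst p (fun ω => (X ω, Z ω)) (w.1, w.2.2) *
        dst p (fun ω => (Y ω, Z ω)) (w.2.1, w.2.2) / dst p Z w.2.2 =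
        ∑ z, dst p Z z * dst p Z z / dst p Z z := by
      rw [Fintype.sum_prod_type]
      simp only [Fintype.sum_prod_type]
      rw [show (∑ x : β, ∑ y : γ, ∑ z : δ, dst p (fun ω => (X ω, Z ω)) (x, z) *
            dst p (fun ω => (Y ω, Z ω)) (y, z) / dst p Z z) =
          ∑ z : δ, ∑ x : β, ∑ y : γ, dst p (fun ω => (X ω, Z ω)) (x, z) *
            dst p (fun ω => (Y ω, Z ω)) (y, z) / dst p Z z from by
        calc (∑ x : β, ∑ y : γ, ∑ z : δ, dst p (fun ω => (X ω, Z ω)) (x, z) *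
              dst p (fun ω => (Y ω, Z ω)) (y, z) / dst p Z z)
            = ∑ x : β, ∑ z : δ, ∑ y : γ, dst p (fun ω => (X ω, Z ω)) (x, z) *
              dst p (fun ω => (Y ω, Z ω)) (y, z) / dst p Z z :=
              Finset.sum_congr rfl fun x _ => Finset.sum_comm
          _ = ∑ z : δ, ∑ x : β, ∑ y : γ, dst p (fun ω => (X ω, Z ω)) (x, z) *
              dst p (fun ω => (Y ω, Z ω)) (y, z) / dst p Z z := Finset.sum_comm]
      refine Finset.sum_congr rfl fun z _ => ?_
      have hxy : ∑ x : β, ∑ y : γ, dst p (fun ω => (X ω, Z ω)) (x, z) *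
          dst p (fun ω => (Y ω, Z ω)) (y, z) / dst p Z z =
          (∑ x : β, dst p (fun ω => (X ω, Z ω)) (x, z)) *
            (∑ y : γ, dst p (fun ω => (Y ω, Z ω)) (y, z)) / dst p Z z := by
        rw [Finset.sum_mul, Finset.sum_div]
        exact Finset.sum_congr rfl fun x _ => by rw [Finset.mul_sum, Finset.sum_div]
      rw [hxy, dst_marginal, dst_marginal]
    have h5 : ∑ z, dst p Z z * dst p Z z / dst p Z z ≤ 1 := by
      have : ∑ z, dst p Z z = 1 := by
        rw [← hsum]
        exact Finset.sum_fiberwise Finset.univ Z p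
      rw [← this]
      refine Finset.sum_le_sum fun z _ => ?_
      rcases eq_or_ne (dst p Z z) 0 with h | h
      · simp [h]
      · rw [mul_div_assoc, div_self h, mul_one]
    calc ∑ ω ∈ s, p ω • g (X ω, Y ω, Z ω) = ∑ ω, p ω * g (X ω, Y ω, Z ω) := h1
      _ = _ := h2
      _ ≤ _ := h3
      _ = _ := h4
      _ ≤ 1 := h5
  have havg0 : 0 ≤ ∑ ω ∈ s, p ω • g (X ω, Y ω, Z ω) :=
    Finset.sum_nonneg fun ω _ => mul_nonneg (hp ω) (hgnonneg _)
  have hlog : Real.log (∑ ω ∈ s, p ω • g (X ω, Y ω, Z ω)) ≤ 0 :=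
    Real.log_nonpos havg0 havg
  -- the key inequality
  have key : ∑ ω, p ω * (Real.log (dst p (fun ω => (X ω, Z ω)) (X ω, Z ω)) +
      Real.log (dst p (fun ω => (Y ω, Z ω)) (Y ω, Z ω)) -
      Real.log (dst p (fun ω => (X ω, Y ω, Z ω)) (X ω, Y ω, Z ω)) -
      Real.log (dst p Z (Z ω))) ≤ 0 := by
    have hrestr : ∑ ω, p ω * (Real.log (dst p (fun ω => (X ω, Z ω)) (X ω, Z ω)) +
        Real.log (dst p (fun ω => (Y ω, Z ω)) (Y ω, Z ω)) -
        Real.log (dst p (fun ω => (X ω, Y ω, Z ω)) (X ω, Y ω, Z ω)) -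
        Real.log (dst p Z (Z ω))) =
        ∑ ω ∈ s, p ω • Real.log (g (X ω, Y ω, Z ω)) := by
      rw [← Finset.sum_subset (Finset.filter_subset (fun ω => 0 < p ω) Finset.univ)
        (fun ω _ hω => by rw [hpzero ω hω]; simp)]
      refine Finset.sum_congr rfl fun ω hω => ?_
      rw [hg]
      rw [Real.log_div (mul_ne_zero (hA ω hω).ne' (hB ω hω).ne')
        (mul_ne_zero (hC ω hω).ne' (hD ω hω).ne'),
        Real.log_mul (hA ω hω).ne' (hB ω hω).ne',
        Real.log_mul (hC ω hω).ne' (hD ω hω).ne', smul_eq_mul]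
      ring
    rw [hrestr]
    exact le_trans jensen hlog
  have expand : ∑ ω, p ω * (Real.log (dst p (fun ω => (X ω, Z ω)) (X ω, Z ω)) +
      Real.log (dst p (fun ω => (Y ω, Z ω)) (Y ω, Z ω)) -
      Real.log (dst p (fun ω => (X ω, Y ω, Z ω)) (X ω, Y ω, Z ω)) -
      Real.log (dst p Z (Z ω))) =
      (∑ ω, p ω * Real.log (dst p (fun ω => (X ω, Z ω)) (X ω, Z ω))) +
      (∑ ω, p ω * Real.log (dst p (fun ω => (Y ω, Z ω)) (Y ω, Z ω))) -
      (∑ ω, p ω * Real.log (dst p (fun ω => (X ω, Y ω, Z ω)) (X ω, Y ω, Z ω))) -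
      (∑ ω, p ω * Real.log (dst p Z (Z ω))) := by
    rw [← Finset.sum_add_distrib, ← Finset.sum_sub_distrib, ← Finset.sum_sub_distrib]
    exact Finset.sum_congr rfl fun ω _ => by ring
  rw [ea, eb, ec, ed]
  rw [expand] at key
  linarith
end CHSHaux

/-- Entropic CHSH inequality: for any four jointly distributed discrete random
variables `A₀, A₁, B₀, B₁`,
`H(A₀B₀) + H(A₀B₁) + H(A₁B₀) - H(A₁B₁) - H(A₀) - H(B₀) ≥ 0`. -/
theorem entropic_CHSH {Ω α : Type*} [Fintype Ω] [Fintype α] [DecidableEq α]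
    (p : Ω → ℝ) (hp : ∀ ω, 0 ≤ p ω) (hsum : ∑ ω, p ω = 1)
    (A0 A1 B0 B1 : Ω → α) :
    0 ≤ shannonEntropy p (fun ω => (A0 ω, B0 ω)) +
        shannonEntropy p (fun ω => (A0 ω, B1 ω)) +
        shannonEntropy p (fun ω => (A1 ω, B0 ω)) -
        shannonEntropy p (fun ω => (A1 ω, B1 ω)) -
        shannonEntropy p A0 - shannonEntropy p B0 := by
  classical
  have h1 : shannonEntropy p (fun ω => (A0 ω, A1 ω, B0 ω)) + shannonEntropy p B0 ≤
      shannonEntropy p (fun ω => (A0 ω, B0 ω)) + shannonEntropy p (fun ω => (A1 ω, B0 ω)) :=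
    CHSHaux.submod p hp hsum A0 A1 B0
  have h2 : shannonEntropy p (fun ω => (B1 ω, (A1 ω, B0 ω), A0 ω)) + shannonEntropy p A0 ≤
      shannonEntropy p (fun ω => (B1 ω, A0 ω)) +
        shannonEntropy p (fun ω => ((A1 ω, B0 ω), A0 ω)) :=
    CHSHaux.submod p hp hsum B1 (fun ω => (A1 ω, B0 ω)) A0
  have m1 : shannonEntropy p (fun ω => (A1 ω, B1 ω)) ≤
      shannonEntropy p (fun ω => (B1 ω, (A1 ω, B0 ω), A0 ω)) :=
    CHSHaux.ent_comp_le p hp (fun ω => (B1 ω, (A1 ω, B0 ω), A0 ω))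
      (fun w => (w.2.1.1, w.1))
  have m2 : shannonEntropy p (fun ω => (B1 ω, A0 ω)) ≤
      shannonEntropy p (fun ω => (A0 ω, B1 ω)) :=
    CHSHaux.ent_comp_le p hp (fun ω => (A0 ω, B1 ω)) Prod.swap
  have m4 : shannonEntropy p (fun ω => ((A1 ω, B0 ω), A0 ω)) ≤
      shannonEntropy p (fun ω => (A0 ω, A1 ω, B0 ω)) :=
    CHSHaux.ent_comp_le p hp (fun ω => (A0 ω, A1 ω, B0 ω))
      (fun w => ((w.2.1, w.2.2), w.1))
  linarith
end

section
/- Abstract CHSH inequality for polymatroids: if $h\in\mathbb{R}^{2^{\{1,2,3,4\}}}$ is monotone and sub-modular (i.e., $h\in\Gamma_4$), then $h_{\{1,3\}}+h_{\{1,4\}}+h_{\{2,3\}}-h_{\{2,4\}}-h_{\{1\}}-h_{\{3\}}\geq 0$, where indices $1,2$ represent $A_0,A_1$ and $3,4$ represent $B_0,B_1$. -/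
open Finset

/-- Abstract CHSH inequality for polymatroids: any `h ∈ Γ₄` (monotone, sub-modular,
vanishing at `∅`) satisfies `h₁₃ + h₁₄ + h₂₃ - h₂₄ - h₁ - h₃ ≥ 0`, where the indices
`0,1` (of `Fin 4`) represent `A₀,A₁` and `2,3` represent `B₀,B₁`. -/
theorem abstract_CHSH (h : Finset (Fin 4) → ℝ)
    (h0 : h ∅ = 0)
    (hmono : ∀ A B : Finset (Fin 4), B ⊆ A → h B ≤ h A)
    (hsub : ∀ A B : Finset (Fin 4), h (A ∪ B) + h (A ∩ B) ≤ h A + h B) :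
    0 ≤ h {0, 2} + h {0, 3} + h {1, 2} - h {1, 3} - h {0} - h {2} := by
  have e1 : ({0,2} ∪ {0,3} : Finset (Fin 4)) = {0,2,3} := by decide
  have e2 : ({0,2} ∩ {0,3} : Finset (Fin 4)) = {0} := by decide
  have e3 : ({1,2} ∪ {0,2,3} : Finset (Fin 4)) = {0,1,2,3} := by decide
  have e4 : ({1,2} ∩ {0,2,3} : Finset (Fin 4)) = {2} := by decide
  have s1 := hsub {0,2} {0,3}
  have s2 := hsub {1,2} {0,2,3}
  rw [e1, e2] at s1
  rw [e3, e4] at s2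
  have m := hmono {0,1,2,3} {1,3} (by decide)
  linarith
end

section
/- Entropic $I_{33}$ (Collins–Gisin) inequality: for any six jointly distributed discrete random variables $A_0,A_1,A_2,B_0,B_1,B_2$, $H(A_0B_0)+H(A_1B_0)+H(A_2B_0)+H(A_0B_1)+H(A_1B_1)-H(A_2B_1)+H(A_0B_2)-H(A_1B_2)-2H(B_0)-H(B_1)-H(A_0)\geq 0$. -/
open Finset

/-!
With `X = (A0, A1)`, the inequality is the sum of five Shannon inequalities, each a submodularity
step `H(U, V) + H(W) ≤ H(U) + H(V)` for a variable `W` that is a function of both `U` and `V`,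
followed where needed by monotonicity `H(f(Y)) ≤ H(Y)`:
* `H(X B0) + H(B0) ≤ H(A0 B0) + H(A1 B0)` and `H(X B1) + H(B1) ≤ H(A0 B1) + H(A1 B1)`,
* `H(X B0 B1) + H(X) ≤ H(X B0) + H(X B1)`,
* `H(A2 B1) + H(B0) ≤ H(X A2 B0 B1) + H(B0) ≤ H(A2 B0) + H(X B0 B1)`,
* `H(A1 B2) + H(A0) ≤ H(X B2) + H(A0) ≤ H(X) + H(A0 B2)`.
Submodularity itself is the nonnegativity of conditional mutual information, proved from
`log t ≤ t - 1`.
-/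

open Real

theorem mul_log_sub_log_le {r t : ℝ} (hr : 0 < r) (ht : 0 < t) :
    r * (log t - log r) ≤ t - r := by
  have h := log_le_sub_one_of_pos (div_pos ht hr)
  rw [log_div ht.ne' hr.ne'] at h
  calc r * (log t - log r) ≤ r * (t / r - 1) := mul_le_mul_of_nonneg_left h hr.le
    _ = t - r := by field_simp

theorem negMulLog_sum_le_sum_negMulLog {ι : Type*} (s : Finset ι) (a : ι → ℝ)
    (ha : ∀ i ∈ s, 0 ≤ a i) : negMulLog (∑ i ∈ s, a i) ≤ ∑ i ∈ s, negMulLog (a i) := by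
  rw [negMulLog, neg_mul, sum_mul, ← sum_neg_distrib]
  refine sum_le_sum fun i hi => ?_
  rcases (ha i hi).eq_or_lt with h | h
  · simp [← h]
  · rw [negMulLog, neg_mul, neg_le_neg_iff]
    exact mul_le_mul_of_nonneg_left (log_le_log h (single_le_sum ha hi)) h.le

theorem mul_log_add_log_sub_le {r a b s : ℝ} (hr : 0 ≤ r) (ha : r ≤ a) (hb : r ≤ b)
    (hs : a ≤ s) : r * (log a + log b - log s - log r) ≤ a * b / s - r := by
  rcases hr.eq_or_lt with rfl | hr
  · rw [zero_mul, sub_zero]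
    exact div_nonneg (mul_nonneg ha hb) (ha.trans hs)
  · have hab := mul_pos (hr.trans_le ha) (hr.trans_le hb)
    have hs' := (hr.trans_le ha).trans_le hs
    rw [← log_mul (hr.trans_le ha).ne' (hr.trans_le hb).ne', ← log_div hab.ne' hs'.ne']
    exact mul_log_sub_log_le hr (div_pos hab hs')

/-- Nonnegativity of the mutual information of the (unnormalised) joint weights `r`. -/
theorem sum_sum_negMulLog_add_negMulLog_sum_le {ι κ : Type*} [Fintype ι] [Fintype κ]
    (r : ι → κ → ℝ) (hr : ∀ i j, 0 ≤ r i j) :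
    ∑ i, ∑ j, negMulLog (r i j) + negMulLog (∑ i, ∑ j, r i j) ≤
      ∑ i, negMulLog (∑ j, r i j) + ∑ j, negMulLog (∑ i, r i j) := by
  set a := fun i => ∑ j, r i j with ha_def
  set b := fun j => ∑ i, r i j with hb_def
  set s := ∑ i, a i with hs_def
  have pointwise : ∀ i j,
      r i j * (log (a i) + log (b j) - log s - log (r i j)) ≤ a i * b j / s - r i j :=
    fun i j => mul_log_add_log_sub_le (hr i j) (single_le_sum (fun j _ => hr i j) (mem_univ j))
      (single_le_sum (fun i _ => hr i j) (mem_univ i))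
      (single_le_sum (fun i _ => sum_nonneg fun j _ => hr i j) (mem_univ i))
  have summed := sum_le_sum fun i (_ : i ∈ univ) =>
    sum_le_sum fun j (_ : j ∈ univ) => pointwise i j
  simp only [mul_sub, mul_add, sum_sub_distrib, sum_add_distrib] at summed
  have total : ∑ i, ∑ j, a i * b j / s = ∑ i, ∑ j, r i j := by
    have hsum_b : ∑ j, b j = s := sum_comm
    simp only [div_eq_mul_inv, ← mul_sum, ← sum_mul, hsum_b, ← hs_def]
    exact mul_self_mul_inv s
  have hr_eq : ∑ i, ∑ j, negMulLog (r i j) = -∑ i, ∑ j, r i j * log (r i j) := by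
    simp only [negMulLog, neg_mul, sum_neg_distrib]
  have hs_eq : negMulLog s = -∑ i, ∑ j, r i j * log s := by
    rw [negMulLog, neg_mul, neg_inj]
    nth_rw 1 [hs_def]
    simp only [ha_def, sum_mul]
  have ha_eq : ∑ i, negMulLog (a i) = -∑ i, ∑ j, r i j * log (a i) := by
    simp only [negMulLog, neg_mul, ha_def, sum_mul, sum_neg_distrib]
  have hb_eq : ∑ j, negMulLog (b j) = -∑ i, ∑ j, r i j * log (b j) := by
    rw [sum_comm]
    simp only [negMulLog, neg_mul, hb_def, sum_mul, sum_neg_distrib]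
  show _ + negMulLog s ≤ ∑ i, negMulLog (a i) + ∑ j, negMulLog (b j)
  linarith

section

variable {Ω α β γ : Type*} [Fintype Ω] (p : Ω → ℝ)

noncomputable def law [DecidableEq α] (X : Ω → α) (x : α) : ℝ :=
  ∑ ω ∈ univ.filter (fun ω => X ω = x), p ω

theorem shannonEntropy_eq_sum_law [Fintype α] [DecidableEq α] (X : Ω → α) :
    shannonEntropy p X = ∑ x, negMulLog (law p X x) := rfl

theorem law_nonneg [DecidableEq α] (hp : ∀ ω, 0 ≤ p ω) (X : Ω → α) (x : α) :
    0 ≤ law p X x :=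
  sum_nonneg fun ω _ => hp ω

theorem law_comp [Fintype α] [DecidableEq α] [DecidableEq β] (f : α → β) (X : Ω → α) (y : β) :
    law p (fun ω => f (X ω)) y = ∑ x ∈ univ.filter (fun x => f x = y), law p X x := by
  unfold law
  rw [← sum_fiberwise_of_maps_to (g := X) (t := univ.filter fun x => f x = y) (by simp)]
  refine sum_congr rfl fun x hx => sum_congr (Finset.ext fun ω => ?_) fun _ _ => rfl
  simp only [mem_filter, mem_univ, true_and] at hx ⊢
  exact ⟨And.right, fun h => ⟨h ▸ hx, h⟩⟩

theorem shannonEntropy_le_of_comp [Fintype α] [DecidableEq α] [Fintype β] [DecidableEq β]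
    (hp : ∀ ω, 0 ≤ p ω) {X : Ω → α} {Y : Ω → β} (f : α → β) (hY : ∀ ω, Y ω = f (X ω)) :
    shannonEntropy p Y ≤ shannonEntropy p X := by
  obtain rfl : Y = fun ω => f (X ω) := funext hY
  simp only [shannonEntropy_eq_sum_law, law_comp]
  calc ∑ y, negMulLog (∑ x ∈ univ.filter (fun x => f x = y), law p X x)
      ≤ ∑ y, ∑ x ∈ univ.filter (fun x => f x = y), negMulLog (law p X x) :=
        sum_le_sum fun y _ =>
          negMulLog_sum_le_sum_negMulLog _ _ fun x _ => law_nonneg p hp X x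
    _ = ∑ x, negMulLog (law p X x) := sum_fiberwise _ _ _

theorem shannonEntropy_triple_add_shannonEntropy_le [Fintype α] [DecidableEq α] [Fintype β]
    [DecidableEq β] [Fintype γ] [DecidableEq γ] (hp : ∀ ω, 0 ≤ p ω)
    (X : Ω → α) (Y : Ω → β) (Z : Ω → γ) :
    shannonEntropy p (fun ω => ((Z ω, X ω), Y ω)) + shannonEntropy p Z ≤
      shannonEntropy p (fun ω => (Z ω, X ω)) + shannonEntropy p (fun ω => (Z ω, Y ω)) := by
  set q := fun z x y => law p (fun ω => ((Z ω, X ω), Y ω)) ((z, x), y)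
  have hZX : ∀ z x, law p (fun ω => (Z ω, X ω)) (z, x) = ∑ y, q z x y := fun z x => by
    simp only [q, law, sum_filter]
    rw [sum_comm]
    simp [Prod.ext_iff, ite_and]
  have hZY : ∀ z y, law p (fun ω => (Z ω, Y ω)) (z, y) = ∑ x, q z x y := fun z y => by
    simp only [q, law, sum_filter]
    rw [sum_comm]
    simp [Prod.ext_iff, ite_and]
  have hZ : ∀ z, law p Z z = ∑ x, ∑ y, q z x y := fun z => by
    simp only [q, law, sum_filter]
    simp_rw [sum_comm (γ := β), sum_comm (γ := α)]
    simp [Prod.ext_iff, ite_and]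
  simp only [shannonEntropy_eq_sum_law, Fintype.sum_prod_type, hZX, hZY, hZ]
  rw [← sum_add_distrib, ← sum_add_distrib]
  exact sum_le_sum fun z _ =>
    sum_sum_negMulLog_add_negMulLog_sum_le (q z) fun x y => law_nonneg p hp _ _

theorem shannonEntropy_submodular [Fintype α] [DecidableEq α] [Fintype β] [DecidableEq β]
    [Fintype γ] [DecidableEq γ] (hp : ∀ ω, 0 ≤ p ω) {U : Ω → α} {V : Ω → β} {W : Ω → γ}
    (f : α → γ) (g : β → γ) (hU : ∀ ω, W ω = f (U ω)) (hV : ∀ ω, W ω = g (V ω)) :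
    shannonEntropy p (fun ω => (U ω, V ω)) + shannonEntropy p W ≤
      shannonEntropy p U + shannonEntropy p V := by
  have hWUV := shannonEntropy_triple_add_shannonEntropy_le p hp U V W
  have hUV : shannonEntropy p (fun ω => (U ω, V ω)) ≤
      shannonEntropy p (fun ω => ((W ω, U ω), V ω)) :=
    shannonEntropy_le_of_comp p hp (fun t => (t.1.2, t.2)) fun _ => rfl
  have hWU : shannonEntropy p (fun ω => (W ω, U ω)) ≤ shannonEntropy p U :=
    shannonEntropy_le_of_comp p hp (fun u => (f u, u)) fun ω => by rw [hU]
  have hWV : shannonEntropy p (fun ω => (W ω, V ω)) ≤ shannonEntropy p V :=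
    shannonEntropy_le_of_comp p hp (fun v => (g v, v)) fun ω => by rw [hV]
  linarith

end

theorem entropic_I33_general {Ω α : Type*} [Fintype Ω] [Fintype α] [DecidableEq α]
    (p : Ω → ℝ) (hp : ∀ ω, 0 ≤ p ω)
    (A0 A1 A2 B0 B1 B2 : Ω → α) :
    0 ≤ shannonEntropy p (fun ω => (A0 ω, B0 ω)) +
        shannonEntropy p (fun ω => (A1 ω, B0 ω)) +
        shannonEntropy p (fun ω => (A2 ω, B0 ω)) +
        shannonEntropy p (fun ω => (A0 ω, B1 ω)) +
        shannonEntropy p (fun ω => (A1 ω, B1 ω)) -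
        shannonEntropy p (fun ω => (A2 ω, B1 ω)) +
        shannonEntropy p (fun ω => (A0 ω, B2 ω)) -
        shannonEntropy p (fun ω => (A1 ω, B2 ω)) -
        2 * shannonEntropy p B0 - shannonEntropy p B1 - shannonEntropy p A0 := by
  let X : Ω → α × α := fun ω => (A0 ω, A1 ω)
  let XB0 : Ω → (α × α) × (α × α) := fun ω => ((A0 ω, B0 ω), (A1 ω, B0 ω))
  let XB1 : Ω → (α × α) × (α × α) := fun ω => ((A0 ω, B1 ω), (A1 ω, B1 ω))
  let XB01 := fun ω => (XB0 ω, XB1 ω)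
  have hB0 : shannonEntropy p XB0 + shannonEntropy p B0 ≤
      shannonEntropy p (fun ω => (A0 ω, B0 ω)) + shannonEntropy p (fun ω => (A1 ω, B0 ω)) :=
    shannonEntropy_submodular p hp Prod.snd Prod.snd (fun _ => rfl) (fun _ => rfl)
  have hB1 : shannonEntropy p XB1 + shannonEntropy p B1 ≤
      shannonEntropy p (fun ω => (A0 ω, B1 ω)) + shannonEntropy p (fun ω => (A1 ω, B1 ω)) :=
    shannonEntropy_submodular p hp Prod.snd Prod.snd (fun _ => rfl) (fun _ => rfl)
  have hX : shannonEntropy p XB01 + shannonEntropy p X ≤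
      shannonEntropy p XB0 + shannonEntropy p XB1 :=
    shannonEntropy_submodular p hp (fun c => (c.1.1, c.2.1)) (fun c => (c.1.1, c.2.1))
      (fun _ => rfl) (fun _ => rfl)
  have hA2B0 : shannonEntropy p (fun ω => ((A2 ω, B0 ω), XB01 ω)) + shannonEntropy p B0 ≤
      shannonEntropy p (fun ω => (A2 ω, B0 ω)) + shannonEntropy p XB01 :=
    shannonEntropy_submodular p hp Prod.snd (fun c => c.1.1.2) (fun _ => rfl) (fun _ => rfl)
  have hA2B1 : shannonEntropy p (fun ω => (A2 ω, B1 ω)) ≤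
      shannonEntropy p (fun ω => ((A2 ω, B0 ω), XB01 ω)) :=
    shannonEntropy_le_of_comp p hp (fun t => (t.1.1, t.2.2.1.2)) fun _ => rfl
  have hA0B2 : shannonEntropy p (fun ω => (X ω, (A0 ω, B2 ω))) + shannonEntropy p A0 ≤
      shannonEntropy p X + shannonEntropy p (fun ω => (A0 ω, B2 ω)) :=
    shannonEntropy_submodular p hp Prod.fst Prod.fst (fun _ => rfl) (fun _ => rfl)
  have hA1B2 : shannonEntropy p (fun ω => (A1 ω, B2 ω)) ≤
      shannonEntropy p (fun ω => (X ω, (A0 ω, B2 ω))) :=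
    shannonEntropy_le_of_comp p hp (fun t => (t.1.2, t.2.2)) fun _ => rfl
  linarith

/-- Entropic Collins–Gisin `I₃₃` inequality for six jointly distributed discrete
random variables. -/
theorem entropic_I33 {Ω α : Type*} [Fintype Ω] [Fintype α] [DecidableEq α]
    (p : Ω → ℝ) (hp : ∀ ω, 0 ≤ p ω) (hsum : ∑ ω, p ω = 1)
    (A0 A1 A2 B0 B1 B2 : Ω → α) :
    0 ≤ shannonEntropy p (fun ω => (A0 ω, B0 ω)) +
        shannonEntropy p (fun ω => (A1 ω, B0 ω)) +
        shannonEntropy p (fun ω => (A2 ω, B0 ω)) +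
        shannonEntropy p (fun ω => (A0 ω, B1 ω)) +
        shannonEntropy p (fun ω => (A1 ω, B1 ω)) -
        shannonEntropy p (fun ω => (A2 ω, B1 ω)) +
        shannonEntropy p (fun ω => (A0 ω, B2 ω)) -
        shannonEntropy p (fun ω => (A1 ω, B2 ω)) -
        2 * shannonEntropy p B0 - shannonEntropy p B1 - shannonEntropy p A0 :=
  entropic_I33_general p hp A0 A1 A2 B0 B1 B2
end

section
/- Abstract entropic Collins–Gisin inequality $I^E_{mm}$ for polymatroids: for any $m\geq 2$ and any monotone sub-modular function $h$ on subsets of $\{A_0,\dots,A_{m-1},B_0,\dots,B_{m-1}\}$ with $h(\emptyset)=0$, one has $h(A_0)+\sum_{j=0}^{m-2}(m-1-j)\,h(B_j) \leq \sum_{j=0}^{m-1}\sum_{i} c_{ij} h(A_iB_j)$, where $c_{ij}=1$ if $i+j\leq m-1$, $c_{ij}=-1$ if $i+j=m$, and $c_{ij}=0$ otherwise. -/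
open Finset
open Fin.NatCast

namespace AbstractCG

variable {k : ℕ}

/-- `Aᵢ` as an element of the ground set, for `m = k+2`. -/
def A (k i : ℕ) : Fin (k+2) ⊕ Fin (k+2) := Sum.inl (i : Fin (k+2))

/-- `Bⱼ` as an element of the ground set. -/
def B (k j : ℕ) : Fin (k+2) ⊕ Fin (k+2) := Sum.inr (j : Fin (k+2))

/-- `{A₀, …, Aₙ}`. -/
def AS (k n : ℕ) : Finset (Fin (k+2) ⊕ Fin (k+2)) := (Finset.range (n+1)).image (A k)

lemma A_inj {i i' : ℕ} (hi : i < k+2) (hi' : i' < k+2) (hAi : A k i = A k i') : i = i' := by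
  simpa [A, Fin.ext_iff, Nat.mod_eq_of_lt hi, Nat.mod_eq_of_lt hi'] using hAi

lemma mem_AS {i n : ℕ} (hi : i < k+2) (hn : n < k+2) : A k i ∈ AS k n ↔ i ≤ n := by
  constructor
  · intro hmem
    simp only [AS, mem_image, mem_range] at hmem
    obtain ⟨a, ha, heq⟩ := hmem
    have := A_inj (k := k) (by omega) hi heq
    omega
  · intro hle
    simp only [AS, mem_image, mem_range]
    exact ⟨i, by omega, rfl⟩

lemma B_not_mem_AS (j n : ℕ) : B k j ∉ AS k n := by
  simp [AS, A, B]

lemma A_ne_B (i j : ℕ) : A k i ≠ B k j := by simp [A, B]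

lemma AS_succ (n : ℕ) : AS k (n+1) = insert (A k (n+1)) (AS k n) := by
  simp [AS, Finset.range_add_one]

lemma AS_subset_succ (n : ℕ) : AS k n ⊆ AS k (n+1) := by
  rw [AS_succ]; exact subset_insert _ _

lemma AS_zero : AS k 0 = {A k 0} := by
  simp [AS]

/-- Column merging: `∑_{i≤n} h(AᵢBⱼ) ≥ n·h(Bⱼ) + h(A₀…AₙBⱼ)`. -/
lemma col (h : Finset (Fin (k+2) ⊕ Fin (k+2)) → ℝ)
    (hsub : ∀ S T, h (S ∪ T) + h (S ∩ T) ≤ h S + h T) : ∀ n, n < k+2 → ∀ j : ℕ,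
    (n : ℝ) * h {B k j} + h (AS k n ∪ {B k j}) ≤
      ∑ i ∈ Finset.range (n+1), h {A k i, B k j} := by
  intro n
  induction n with
  | zero =>
    intro _ j
    have : AS k 0 ∪ {B k j} = {A k 0, B k j} := by
      rw [AS_zero]; rfl
    simp [this]
  | succ n ih =>
    intro hn j
    rw [Finset.sum_range_succ]
    have hU : (AS k n ∪ {B k j}) ∪ {A k (n+1), B k j} = AS k (n+1) ∪ {B k j} := by
      rw [AS_succ]
      ext x
      simp only [mem_union, mem_insert, mem_singleton]
      tauto
    have hI : (AS k n ∪ {B k j}) ∩ {A k (n+1), B k j} = {B k j} := by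
      ext x
      simp only [mem_inter, mem_union, mem_insert, mem_singleton]
      constructor
      · rintro ⟨h1, h2 | h2⟩
        · subst h2
          rcases h1 with h1 | h1
          · have := (mem_AS (k := k) (by omega) (by omega)).mp h1
            omega
          · exact absurd h1 (A_ne_B _ _)
        · exact h2
      · rintro rfl
        exact ⟨Or.inr rfl, Or.inr rfl⟩
    have hstep := hsub (AS k n ∪ {B k j}) {A k (n+1), B k j}
    rw [hU, hI] at hstep
    have hih := ih (by omega) j
    push_cast
    linarith

/-- Chain extraction of the negative terms. -/
lemma chain (h : Finset (Fin (k+2) ⊕ Fin (k+2)) → ℝ)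
    (hmono : ∀ S T, S ⊆ T → h S ≤ h T)
    (hsub : ∀ S T, h (S ∪ T) + h (S ∩ T) ≤ h S + h T) : ∀ t, t ≤ k+1 →
    h (AS k (k+1-t)) + ∑ j ∈ Finset.Icc 1 t, h {A k (k+2-j), B k j} ≤
      h (AS k (k+1)) + ∑ j ∈ Finset.Icc 1 t, h (AS k (k+1-j) ∪ {B k j}) := by
  intro t
  induction t with
  | zero => simp
  | succ t ih =>
    intro ht
    have hih := ih (by omega)
    rw [Finset.sum_Icc_succ_top (by omega : 1 ≤ t + 1),
        Finset.sum_Icc_succ_top (by omega : 1 ≤ t + 1)]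
    -- step inequality
    rw [show k+1-(t+1) = k-t from by omega, show k+2-(t+1) = (k-t)+1 from by omega]
    rw [show k+1-t = (k-t)+1 from by omega] at hih
    set n := k - t with hn
    have hU : AS k (n+1) ∪ (AS k n ∪ {B k (t+1)}) = AS k (n+1) ∪ {B k (t+1)} := by
      ext x
      simp only [mem_union, mem_singleton]
      constructor
      · rintro (h1 | h1 | h1)
        · exact Or.inl h1
        · exact Or.inl (AS_subset_succ n h1)
        · exact Or.inr h1
      · rintro (h1 | h1)
        · exact Or.inl h1
        · exact Or.inr (Or.inr h1)
    have hI : AS k (n+1) ∩ (AS k n ∪ {B k (t+1)}) = AS k n := by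
      ext x
      simp only [mem_inter, mem_union, mem_singleton]
      constructor
      · rintro ⟨h1, h2 | h2⟩
        · exact h2
        · subst h2
          exact absurd h1 (B_not_mem_AS _ _)
      · intro h1
        exact ⟨AS_subset_succ n h1, Or.inl h1⟩
    have hstep := hsub (AS k (n+1)) (AS k n ∪ {B k (t+1)})
    rw [hU, hI] at hstep
    have hsubset : ({A k (n+1), B k (t+1)} : Finset _) ⊆ AS k (n+1) ∪ {B k (t+1)} := by
      intro x hx
      simp only [mem_insert, mem_singleton] at hx
      rcases hx with rfl | rfl
      · exact mem_union_left _ ((mem_AS (k := k) (by omega) (by omega)).mpr le_rfl)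
      · exact mem_union_right _ (mem_singleton_self _)
    have hmo := hmono _ _ hsubset
    linarith

end AbstractCG

open AbstractCG in
/-- Abstract entropic Collins–Gisin inequality `I^E_{mm}` for polymatroids on the
ground set `{A₀,…,A_{m-1}, B₀,…,B_{m-1}}` (encoded as `Fin m ⊕ Fin m`, with
`Sum.inl i = Aᵢ` and `Sum.inr j = Bⱼ`):
`h(A₀) + ∑_{j} (m-1-j) h(Bⱼ) ≤ ∑_{i,j} c_{ij} h(AᵢBⱼ)` where `c_{ij} = 1` if
`i+j ≤ m-1`, `c_{ij} = -1` if `i+j = m`, and `c_{ij} = 0` otherwise. -/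
theorem abstract_CG (m : ℕ) (hm : 2 ≤ m) (h : Finset (Fin m ⊕ Fin m) → ℝ)
    (h0 : h ∅ = 0)
    (hmono : ∀ S T : Finset (Fin m ⊕ Fin m), S ⊆ T → h S ≤ h T)
    (hsub : ∀ S T : Finset (Fin m ⊕ Fin m), h (S ∪ T) + h (S ∩ T) ≤ h S + h T) :
    h {Sum.inl ⟨0, by omega⟩} +
      ∑ j : Fin m, ((m - 1 - j.val : ℕ) : ℝ) * h {Sum.inr j} ≤
    ∑ i : Fin m, ∑ j : Fin m,
      (if i.val + j.val ≤ m - 1 then (1 : ℝ)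
        else if i.val + j.val = m then -1 else 0) * h {Sum.inl i, Sum.inr j} := by
  obtain ⟨k, rfl⟩ : ∃ k, m = k + 2 := ⟨m - 2, by omega⟩
  -- rewrite LHS pieces
  have hA0 : (Sum.inl ⟨0, by omega⟩ : Fin (k+2) ⊕ Fin (k+2)) = A k 0 := by
    simp [A, Fin.ext_iff]
  have hBsum : ∑ j : Fin (k+2), ((k + 2 - 1 - j.val : ℕ) : ℝ) * h {Sum.inr j}
      = ∑ j ∈ Finset.range (k+2), ((k + 1 - j : ℕ) : ℝ) * h {B k j} := by
    rw [← Fin.sum_univ_eq_sum_range (fun j => ((k + 1 - j : ℕ) : ℝ) * h {B k j})]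
    refine Finset.sum_congr rfl fun j _ => ?_
    have h1 : B k j.val = Sum.inr j := by
      simp [B, Fin.cast_val_eq_self]
    have h2 : k + 2 - 1 - j.val = k + 1 - j.val := by omega
    rw [h1, h2]
  -- rewrite RHS
  have hRHS : ∑ i : Fin (k+2), ∑ j : Fin (k+2),
      (if i.val + j.val ≤ k + 2 - 1 then (1 : ℝ)
        else if i.val + j.val = k + 2 then -1 else 0) * h {Sum.inl i, Sum.inr j}
      = ∑ j ∈ Finset.range (k+2), ∑ i ∈ Finset.range (k+2),
          (if i + j ≤ k + 1 then (1 : ℝ)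
            else if i + j = k + 2 then -1 else 0) * h {A k i, B k j} := by
    rw [Finset.sum_comm]
    rw [← Fin.sum_univ_eq_sum_range (fun j => ∑ i ∈ Finset.range (k+2),
          (if i + j ≤ k + 1 then (1 : ℝ)
            else if i + j = k + 2 then -1 else 0) * h {A k i, B k j})]
    refine Finset.sum_congr rfl fun j _ => ?_
    rw [← Fin.sum_univ_eq_sum_range (fun i =>
          (if i + j.val ≤ k + 1 then (1 : ℝ)
            else if i + j.val = k + 2 then -1 else 0) * h {A k i, B k (j.val)})]
    refine Finset.sum_congr rfl fun i _ => ?_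
    have hAi : A k i.val = Sum.inl i := by simp [A, Fin.cast_val_eq_self]
    have hBj : B k j.val = Sum.inr j := by simp [B, Fin.cast_val_eq_self]
    rw [hAi, hBj, show k + 2 - 1 = k + 1 from rfl]
  rw [hA0, hBsum, hRHS]
  -- per-column computation of the inner sum
  have hcol : ∀ j ∈ Finset.range (k+2),
      ∑ i ∈ Finset.range (k+2),
        (if i + j ≤ k + 1 then (1 : ℝ)
          else if i + j = k + 2 then -1 else 0) * h {A k i, B k j}
      = (∑ i ∈ Finset.range (k+2-j), h {A k i, B k j})
        - (if 1 ≤ j then h {A k (k+2-j), B k j} else 0) := by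
    intro j hj
    rw [Finset.mem_range] at hj
    rw [Finset.range_eq_Ico, ← Finset.sum_Ico_consecutive _ (Nat.zero_le (k+2-j)) (by omega),
        ← Finset.range_eq_Ico]
    have h1 : ∑ i ∈ Finset.range (k+2-j),
        (if i + j ≤ k + 1 then (1 : ℝ)
          else if i + j = k + 2 then -1 else 0) * h {A k i, B k j}
        = ∑ i ∈ Finset.range (k+2-j), h {A k i, B k j} := by
      refine Finset.sum_congr rfl fun i hi => ?_
      rw [Finset.mem_range] at hi
      rw [if_pos (by omega), one_mul]
    have h2 : ∑ i ∈ Finset.Ico (k+2-j) (k+2),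
        (if i + j ≤ k + 1 then (1 : ℝ)
          else if i + j = k + 2 then -1 else 0) * h {A k i, B k j}
        = -(if 1 ≤ j then h {A k (k+2-j), B k j} else 0) := by
      by_cases hj1 : 1 ≤ j
      · rw [if_pos hj1]
        rw [Finset.sum_eq_single (k+2-j)]
        · rw [if_neg (by omega), if_pos (by omega)]
          ring
        · intro b hb hbne
          rw [Finset.mem_Ico] at hb
          rw [if_neg (by omega), if_neg (by omega), zero_mul]
        · intro hnot
          exact absurd (Finset.mem_Ico.mpr ⟨le_rfl, by omega⟩) hnot
      · rw [if_neg hj1]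
        have : k + 2 - j = k + 2 := by omega
        rw [this]
        simp
    rw [h1, h2]
    ring
  rw [Finset.sum_congr rfl hcol, Finset.sum_sub_distrib]
  -- lower bound the positive part columnwise
  have hposge : ∑ j ∈ Finset.range (k+2), ((k + 1 - j : ℕ) : ℝ) * h {B k j}
        + ∑ j ∈ Finset.range (k+2), h (AS k (k+1-j) ∪ {B k j})
      ≤ ∑ j ∈ Finset.range (k+2), ∑ i ∈ Finset.range (k+2-j), h {A k i, B k j} := by
    rw [← Finset.sum_add_distrib]
    refine Finset.sum_le_sum fun j hj => ?_
    rw [Finset.mem_range] at hj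
    have := col h hsub (k+1-j) (by omega) j
    have hr : k + 1 - j + 1 = k + 2 - j := by omega
    rw [hr] at this
    exact this
  -- the subtracted part: rewrite as an Icc sum
  have hnegeq : ∑ j ∈ Finset.range (k+2), (if 1 ≤ j then h {A k (k+2-j), B k j} else 0)
      = ∑ j ∈ Finset.Icc 1 (k+1), h {A k (k+2-j), B k j} := by
    rw [← Finset.sum_filter]
    congr 1
    ext x
    simp only [Finset.mem_filter, Finset.mem_range, Finset.mem_Icc]
    omega
  have hsplit : ∀ f : ℕ → ℝ, ∑ j ∈ Finset.range (k+2), f j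
      = f 0 + ∑ j ∈ Finset.Icc 1 (k+1), f j := by
    intro f
    have : Finset.Icc 1 (k+1) = Finset.Ico 1 (k+2) := by
      ext x; simp [Nat.lt_succ_iff]
    rw [this, Finset.range_eq_Ico, ← Finset.sum_Ico_consecutive _ (Nat.zero_le 1) (by omega)]
    simp
  have hchain := chain h hmono hsub (k+1) le_rfl
  simp only [Nat.sub_self] at hchain
  have hX0 : h (AS k (k+1)) ≤ h (AS k (k+1-0) ∪ {B k 0}) := by
    exact hmono _ _ (Finset.subset_union_left)
  have hA0AS : h {A k 0} = h (AS k 0) := by rw [AS_zero]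
  have hsX : ∑ j ∈ Finset.range (k+2), h (AS k (k+1-j) ∪ {B k j})
      = h (AS k (k+1-0) ∪ {B k 0}) + ∑ j ∈ Finset.Icc 1 (k+1), h (AS k (k+1-j) ∪ {B k j}) :=
    hsplit _
  rw [hA0AS]
  linarith [hposge, hnegeq, hchain, hsX, hX0]
end

section
/- Entropic CHSH with bounded shared randomness: let $A_0,A_1,B_0,B_1,\lambda$ be jointly distributed discrete random variables with $I(A_0A_1:B_0B_1|\lambda)=0$ and $H(\lambda)\leq\mathcal{C}$. Then $-H(A_0,B_1)-H(A_1,B_0)+H(A_1,B_1)+H(A_0)+H(B_0)\leq\mathcal{C}$. -/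
open Finset

section Helpers

variable {Ω : Type*} [Fintype Ω] {α β ζ : Type*} [Fintype α] [DecidableEq α]
  [Fintype β] [DecidableEq β] [Fintype ζ] [DecidableEq ζ]

/-- Probability mass of the event `X = x`. -/
noncomputable def pmass (p : Ω → ℝ) (X : Ω → α) (x : α) : ℝ :=
  ∑ ω ∈ Finset.univ.filter (fun ω => X ω = x), p ω

lemma shannonEntropy_eq (p : Ω → ℝ) (X : Ω → α) :
    shannonEntropy p X = ∑ x : α, Real.negMulLog (pmass p X x) := rfl

lemma pmass_nonneg (p : Ω → ℝ) (hp : ∀ ω, 0 ≤ p ω) (X : Ω → α) (x : α) : 0 ≤ pmass p X x :=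
  Finset.sum_nonneg fun ω _ => hp ω

lemma sum_pmass (p : Ω → ℝ) (X : Ω → α) : ∑ x : α, pmass p X x = ∑ ω, p ω :=
  Finset.sum_fiberwise_of_maps_to (fun ω _ => Finset.mem_univ _) p

lemma pmass_fst (p : Ω → ℝ) (X : Ω → α) (Y : Ω → β) (x : α) :
    pmass p X x = ∑ y : β, pmass p (fun ω => (X ω, Y ω)) (x, y) := by
  rw [pmass, ← Finset.sum_fiberwise_of_maps_to (g := Y) (t := Finset.univ)
      (fun ω _ => Finset.mem_univ _) p]
  refine Finset.sum_congr rfl fun y _ => ?_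
  rw [pmass]
  congr 1
  ext ω
  simp [Prod.mk.injEq]

lemma pmass_snd (p : Ω → ℝ) (X : Ω → α) (Y : Ω → β) (y : β) :
    pmass p Y y = ∑ x : α, pmass p (fun ω => (X ω, Y ω)) (x, y) := by
  rw [pmass, ← Finset.sum_fiberwise_of_maps_to (g := X) (t := Finset.univ)
      (fun ω _ => Finset.mem_univ _) p]
  refine Finset.sum_congr rfl fun x _ => ?_
  rw [pmass]
  congr 1
  ext ω
  simp [Prod.mk.injEq, and_comm]

lemma pmass_comp_inj (p : Ω → ℝ) (g : α → β) (hg : Function.Injective g) (X : Ω → α) (x : α) :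
    pmass p (fun ω => g (X ω)) (g x) = pmass p X x := by
  rw [pmass, pmass]
  congr 1
  ext ω
  simp [hg.eq_iff]

lemma pmass_comp_notmem (p : Ω → ℝ) (g : α → β) (X : Ω → α) (b : β) (hb : ∀ a, g a ≠ b) :
    pmass p (fun ω => g (X ω)) b = 0 := by
  rw [pmass, Finset.filter_false_of_mem, Finset.sum_empty]
  intro ω _
  exact hb (X ω)

lemma shannonEntropy_comp_inj (p : Ω → ℝ) (g : α → β) (hg : Function.Injective g) (X : Ω → α) :
    shannonEntropy p (fun ω => g (X ω)) = shannonEntropy p X := by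
  rw [shannonEntropy_eq, shannonEntropy_eq]
  have h1 : ∀ b ∈ (Finset.univ : Finset β), b ∉ Finset.univ.image g →
      Real.negMulLog (pmass p (fun ω => g (X ω)) b) = 0 := by
    intro b _ hb
    have hnb : ∀ a, g a ≠ b := by
      intro a h
      exact hb (Finset.mem_image.mpr ⟨a, Finset.mem_univ a, h⟩)
    rw [pmass_comp_notmem p g X b hnb, Real.negMulLog_zero]
  rw [← Finset.sum_subset (Finset.subset_univ _) h1,
    Finset.sum_image (fun a _ b _ h => hg h)]
  exact Finset.sum_congr rfl fun a _ => by rw [pmass_comp_inj p g hg]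

lemma ent_eq (p : Ω → ℝ) {X : Ω → α} {Y : Ω → β} (g : α → β) (g' : β → α)
    (hgg : ∀ a, g' (g a) = a) (h : ∀ ω, g (X ω) = Y ω) :
    shannonEntropy p Y = shannonEntropy p X := by
  have hY : Y = fun ω => g (X ω) := funext fun ω => (h ω).symm
  rw [hY]
  exact shannonEntropy_comp_inj p g (Function.LeftInverse.injective hgg) X

lemma negMulLog_sum_le {ι : Type*} (s : Finset ι) (a : ι → ℝ) (ha : ∀ i ∈ s, 0 ≤ a i) :
    Real.negMulLog (∑ i ∈ s, a i) ≤ ∑ i ∈ s, Real.negMulLog (a i) := by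
  have h1 : Real.negMulLog (∑ i ∈ s, a i)
      = ∑ i ∈ s, -(a i * Real.log (∑ j ∈ s, a j)) := by
    rw [Real.negMulLog, neg_mul, Finset.sum_mul, ← Finset.sum_neg_distrib]
  rw [h1]
  refine Finset.sum_le_sum fun i hi => ?_
  rcases eq_or_lt_of_le (ha i hi) with h0 | h0
  · simp [← h0]
  · rw [Real.negMulLog, neg_mul]
    have hle : a i ≤ ∑ j ∈ s, a j := Finset.single_le_sum ha hi
    have hlog := Real.log_le_log h0 hle
    nlinarith [h0.le]

lemma shannonEntropy_le_pair (p : Ω → ℝ) (hp : ∀ ω, 0 ≤ p ω) (X : Ω → α) (Y : Ω → β) :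
    shannonEntropy p X ≤ shannonEntropy p (fun ω => (X ω, Y ω)) := by
  rw [shannonEntropy_eq, shannonEntropy_eq, Fintype.sum_prod_type]
  refine Finset.sum_le_sum fun x _ => ?_
  rw [pmass_fst p X Y x]
  exact negMulLog_sum_le Finset.univ _ (fun y _ => pmass_nonneg p hp _ _)

lemma gibbs_point {q a b c : ℝ} (hq : 0 ≤ q) (ha : q ≤ a) (hb : q ≤ b) (hac : a ≤ c)
    (hb0 : 0 ≤ b) (hc0 : 0 ≤ c) :
    q - (if c = 0 then 0 else a * b / c) ≤
      q * Real.log q + q * Real.log c - q * Real.log a - q * Real.log b := by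
  rcases eq_or_lt_of_le hq with h0 | h0
  · have ha0 : 0 ≤ a := le_trans hq (h0 ▸ ha)
    rw [← h0]
    split_ifs with hc
    · simp
    · have h : 0 ≤ a * b / c := div_nonneg (mul_nonneg ha0 hb0) hc0
      simp only [zero_mul, zero_sub, sub_zero, add_zero, zero_add]
      linarith
  · have ha0 : 0 < a := lt_of_lt_of_le h0 ha
    have hb0' : 0 < b := lt_of_lt_of_le h0 hb
    have hc0' : 0 < c := lt_of_lt_of_le ha0 hac
    rw [if_neg (ne_of_gt hc0')]
    have hpos : 0 < a * b / (c * q) := div_pos (mul_pos ha0 hb0') (mul_pos hc0' h0)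
    have hlog := Real.log_le_sub_one_of_pos hpos
    have h2 := mul_le_mul_of_nonneg_left hlog hq
    have hexp : Real.log (a * b / (c * q)) =
        Real.log a + Real.log b - Real.log c - Real.log q := by
      rw [Real.log_div (mul_pos ha0 hb0').ne' (mul_pos hc0' h0).ne',
        Real.log_mul ha0.ne' hb0'.ne', Real.log_mul hc0'.ne' h0.ne']
      ring
    rw [hexp] at h2
    have h3 : q * (a * b / (c * q) - 1) = a * b / c - q := by
      field_simp
    have h4 : q * (Real.log a + Real.log b - Real.log c - Real.log q)
        = q * Real.log a + q * Real.log b - q * Real.log c - q * Real.log q := by ring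
    linarith [h2, h3, h4]

lemma sum3_comm {M : Type*} [AddCommMonoid M] (f : α → β → ζ → M) :
    ∑ x, ∑ y, ∑ z, f x y z = ∑ z, ∑ x, ∑ y, f x y z := by
  calc ∑ x, ∑ y, ∑ z, f x y z = ∑ x, ∑ z, ∑ y, f x y z :=
        Finset.sum_congr rfl fun x _ => Finset.sum_comm
    _ = ∑ z, ∑ x, ∑ y, f x y z := Finset.sum_comm

lemma sum3_comm' {M : Type*} [AddCommMonoid M] (f : α → β → ζ → M) :
    ∑ x, ∑ y, ∑ z, f x y z = ∑ y, ∑ z, ∑ x, f x y z := by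
  calc ∑ x, ∑ y, ∑ z, f x y z = ∑ y, ∑ x, ∑ z, f x y z := Finset.sum_comm
    _ = ∑ y, ∑ z, ∑ x, f x y z := Finset.sum_congr rfl fun y _ => Finset.sum_comm

/-- Submodularity at the level of distributions on a triple product. -/
lemma submod_dist (q : α × β × ζ → ℝ) (hq0 : ∀ t, 0 ≤ q t) (hq1 : ∑ t, q t = 1) :
    (∑ t, Real.negMulLog (q t)) + ∑ z, Real.negMulLog (∑ x, ∑ y, q (x, y, z)) ≤
      (∑ x, ∑ z, Real.negMulLog (∑ y, q (x, y, z))) +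
        ∑ y, ∑ z, Real.negMulLog (∑ x, q (x, y, z)) := by
  classical
  have ha0 : ∀ x z, 0 ≤ ∑ y, q (x, y, z) := fun x z => Finset.sum_nonneg fun _ _ => hq0 _
  have hb0 : ∀ y z, 0 ≤ ∑ x, q (x, y, z) := fun y z => Finset.sum_nonneg fun _ _ => hq0 _
  have hc0 : ∀ z, 0 ≤ ∑ x, ∑ y, q (x, y, z) := fun z => Finset.sum_nonneg fun _ _ => ha0 _ _
  set r : α × β × ζ → ℝ := fun t =>
    if (∑ x, ∑ y, q (x, y, t.2.2)) = 0 then 0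
    else (∑ y, q (t.1, y, t.2.2)) * (∑ x, q (x, t.2.1, t.2.2)) / (∑ x, ∑ y, q (x, y, t.2.2))
    with hr
  have key : ∀ t : α × β × ζ, q t - r t ≤
      q t * Real.log (q t) + q t * Real.log (∑ x, ∑ y, q (x, y, t.2.2))
        - q t * Real.log (∑ y, q (t.1, y, t.2.2))
        - q t * Real.log (∑ x, q (x, t.2.1, t.2.2)) := by
    rintro ⟨x, y, z⟩
    have h1 : q (x, y, z) ≤ ∑ y', q (x, y', z) :=
      Finset.single_le_sum (fun i _ => hq0 (x, i, z)) (Finset.mem_univ y)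
    have h2 : q (x, y, z) ≤ ∑ x', q (x', y, z) :=
      Finset.single_le_sum (fun i _ => hq0 (i, y, z)) (Finset.mem_univ x)
    have h3 : (∑ y', q (x, y', z)) ≤ ∑ x', ∑ y', q (x', y', z) :=
      Finset.single_le_sum (fun i _ => ha0 i z) (Finset.mem_univ x)
    exact gibbs_point (hq0 _) h1 h2 h3 (hb0 y z) (hc0 z)
  have hsum_le : ∑ t : α × β × ζ, (q t - r t) ≤
      ∑ t : α × β × ζ, (q t * Real.log (q t) + q t * Real.log (∑ x, ∑ y, q (x, y, t.2.2))
        - q t * Real.log (∑ y, q (t.1, y, t.2.2))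
        - q t * Real.log (∑ x, q (x, t.2.1, t.2.2))) :=
    Finset.sum_le_sum fun t _ => key t
  have hsplit : ∑ t : α × β × ζ, (q t * Real.log (q t)
        + q t * Real.log (∑ x, ∑ y, q (x, y, t.2.2))
        - q t * Real.log (∑ y, q (t.1, y, t.2.2))
        - q t * Real.log (∑ x, q (x, t.2.1, t.2.2)))
      = (∑ t : α × β × ζ, q t * Real.log (q t))
        + (∑ t : α × β × ζ, q t * Real.log (∑ x, ∑ y, q (x, y, t.2.2)))
        - (∑ t : α × β × ζ, q t * Real.log (∑ y, q (t.1, y, t.2.2)))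
        - (∑ t : α × β × ζ, q t * Real.log (∑ x, q (x, t.2.1, t.2.2))) := by
    rw [Finset.sum_sub_distrib, Finset.sum_sub_distrib, Finset.sum_add_distrib]
  have T1 : ∑ t : α × β × ζ, q t * Real.log (q t) = -∑ t, Real.negMulLog (q t) := by
    simp [Real.negMulLog, neg_mul, Finset.sum_neg_distrib]
  have T2 : ∑ t : α × β × ζ, q t * Real.log (∑ x, ∑ y, q (x, y, t.2.2))
      = -∑ z, Real.negMulLog (∑ x, ∑ y, q (x, y, z)) := by
    rw [Fintype.sum_prod_type]
    simp only [Fintype.sum_prod_type]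
    rw [sum3_comm (f := fun x y z => q (x, y, z) * Real.log (∑ x, ∑ y, q (x, y, z)))]
    rw [← Finset.sum_neg_distrib]
    refine Finset.sum_congr rfl fun z _ => ?_
    simp only [← Finset.sum_mul]
    rw [Real.negMulLog, neg_mul, neg_neg]
  have T3 : ∑ t : α × β × ζ, q t * Real.log (∑ y, q (t.1, y, t.2.2))
      = -∑ x, ∑ z, Real.negMulLog (∑ y, q (x, y, z)) := by
    rw [Fintype.sum_prod_type]
    simp only [Fintype.sum_prod_type]
    rw [← Finset.sum_neg_distrib]
    refine Finset.sum_congr rfl fun x _ => ?_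
    rw [Finset.sum_comm, ← Finset.sum_neg_distrib]
    refine Finset.sum_congr rfl fun z _ => ?_
    rw [← Finset.sum_mul, Real.negMulLog, neg_mul, neg_neg]
  have T4 : ∑ t : α × β × ζ, q t * Real.log (∑ x, q (x, t.2.1, t.2.2))
      = -∑ y, ∑ z, Real.negMulLog (∑ x, q (x, y, z)) := by
    rw [Fintype.sum_prod_type]
    simp only [Fintype.sum_prod_type]
    rw [sum3_comm' (f := fun x y z => q (x, y, z) * Real.log (∑ x, q (x, y, z)))]
    rw [← Finset.sum_neg_distrib]
    refine Finset.sum_congr rfl fun y _ => ?_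
    rw [← Finset.sum_neg_distrib]
    refine Finset.sum_congr rfl fun z _ => ?_
    rw [← Finset.sum_mul, Real.negMulLog, neg_mul, neg_neg]
  have hq1' : ∑ z, ∑ x, ∑ y, q (x, y, z) = 1 := by
    rw [← sum3_comm (f := fun x y z => q (x, y, z))]
    rw [← hq1, Fintype.sum_prod_type]
    simp only [Fintype.sum_prod_type]
  have hrsum : ∑ t : α × β × ζ, r t ≤ 1 := by
    have hre : ∑ t : α × β × ζ, r t = ∑ z, ∑ x, ∑ y, r (x, y, z) := by
      rw [Fintype.sum_prod_type]
      simp only [Fintype.sum_prod_type]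
      exact sum3_comm (f := fun x y z => r (x, y, z))
    rw [hre, ← hq1']
    refine Finset.sum_le_sum fun z _ => ?_
    by_cases hc : (∑ x, ∑ y, q (x, y, z)) = 0
    · have h0 : ∑ x, ∑ y, r (x, y, z) = 0 := by simp [hr, hc]
      rw [h0]
      exact hc0 z
    · have hrxy : ∀ x y, r (x, y, z)
          = (∑ y', q (x, y', z)) * ((∑ x', q (x', y, z)) / (∑ x, ∑ y, q (x, y, z))) := by
        intro x y
        simp only [hr, hc, if_false, mul_div_assoc]
      calc ∑ x, ∑ y, r (x, y, z)
          = ∑ x, ∑ y, (∑ y', q (x, y', z)) * ((∑ x', q (x', y, z)) / (∑ x, ∑ y, q (x, y, z))) :=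
            Finset.sum_congr rfl fun x _ => Finset.sum_congr rfl fun y _ => hrxy x y
        _ = ∑ x, (∑ y', q (x, y', z)) * ((∑ y, ∑ x', q (x', y, z)) / (∑ x, ∑ y, q (x, y, z))) := by
            refine Finset.sum_congr rfl fun x _ => ?_
            rw [← Finset.mul_sum, ← Finset.sum_div]
        _ = (∑ x, ∑ y', q (x, y', z)) * ((∑ y, ∑ x', q (x', y, z)) / (∑ x, ∑ y, q (x, y, z))) := by
            rw [Finset.sum_mul]
        _ = ∑ x, ∑ y, q (x, y, z) := by
            rw [Finset.sum_comm (f := fun y x' => q (x', y, z))]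
            rw [div_self hc, mul_one]
        _ ≤ ∑ x, ∑ y, q (x, y, z) := le_rfl
  have hqr : ∑ t : α × β × ζ, (q t - r t) = 1 - ∑ t : α × β × ζ, r t := by
    rw [Finset.sum_sub_distrib, hq1]
  linarith [hsum_le, hsplit, T1, T2, T3, T4, hqr, hrsum]

/-- Submodularity of Shannon entropy: `H(X,Y,Z) + H(Z) ≤ H(X,Z) + H(Y,Z)`. -/
lemma shannonEntropy_submod (p : Ω → ℝ) (hp : ∀ ω, 0 ≤ p ω) (hsum : ∑ ω, p ω = 1)
    (X : Ω → α) (Y : Ω → β) (Z : Ω → ζ) :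
    shannonEntropy p (fun ω => (X ω, Y ω, Z ω)) + shannonEntropy p Z ≤
      shannonEntropy p (fun ω => (X ω, Z ω)) + shannonEntropy p (fun ω => (Y ω, Z ω)) := by
  have main := submod_dist (pmass p (fun ω => (X ω, Y ω, Z ω)))
      (fun t => pmass_nonneg p hp _ t) (by rw [sum_pmass]; exact hsum)
  have e1 : shannonEntropy p (fun ω => (X ω, Y ω, Z ω))
      = ∑ t : α × β × ζ, Real.negMulLog (pmass p (fun ω => (X ω, Y ω, Z ω)) t) := rfl
  have e2 : shannonEntropy p Z
      = ∑ z, Real.negMulLog (∑ x, ∑ y, pmass p (fun ω => (X ω, Y ω, Z ω)) (x, y, z)) := by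
    rw [shannonEntropy_eq]
    refine Finset.sum_congr rfl fun z _ => ?_
    congr 1
    have h1 : ∀ y, pmass p (fun ω => (Y ω, Z ω)) (y, z)
        = ∑ x, pmass p (fun ω => (X ω, Y ω, Z ω)) (x, y, z) :=
      fun y => pmass_snd p X (fun ω => (Y ω, Z ω)) (y, z)
    rw [pmass_snd p Y Z z]
    exact (Finset.sum_congr rfl fun y _ => h1 y).trans Finset.sum_comm
  have e3 : shannonEntropy p (fun ω => (X ω, Z ω))
      = ∑ x, ∑ z, Real.negMulLog (∑ y, pmass p (fun ω => (X ω, Y ω, Z ω)) (x, y, z)) := by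
    rw [shannonEntropy_eq, Fintype.sum_prod_type]
    refine Finset.sum_congr rfl fun x _ => Finset.sum_congr rfl fun z _ => ?_
    congr 1
    rw [pmass_fst p (fun ω => (X ω, Z ω)) Y (x, z)]
    exact Finset.sum_congr rfl fun y _ =>
      pmass_comp_inj p (fun t : α × β × ζ => ((t.1, t.2.2), t.2.1))
        (Function.LeftInverse.injective
          (g := fun s : (α × ζ) × β => (s.1.1, s.2, s.1.2)) fun t => rfl)
        (fun ω => (X ω, Y ω, Z ω)) (x, y, z)
  have e4 : shannonEntropy p (fun ω => (Y ω, Z ω))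
      = ∑ y, ∑ z, Real.negMulLog (∑ x, pmass p (fun ω => (X ω, Y ω, Z ω)) (x, y, z)) := by
    rw [shannonEntropy_eq, Fintype.sum_prod_type]
    refine Finset.sum_congr rfl fun y _ => Finset.sum_congr rfl fun z _ => ?_
    congr 1
    exact pmass_snd p X (fun ω => (Y ω, Z ω)) (y, z)
  rw [e1, e2, e3, e4]
  exact main

end Helpers

/-- Entropic CHSH with bounded shared randomness: if `I(A₀A₁ : B₀B₁ | λ) = 0` and
`H(λ) ≤ C`, then `-H(A₀B₁) - H(A₁B₀) + H(A₁B₁) + H(A₀) + H(B₀) ≤ C`. -/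
theorem entropic_CHSH_bounded_shared_randomness {Ω α γ : Type*} [Fintype Ω]
    [Fintype α] [DecidableEq α] [Fintype γ] [DecidableEq γ]
    (p : Ω → ℝ) (hp : ∀ ω, 0 ≤ p ω) (hsum : ∑ ω, p ω = 1)
    (A0 A1 B0 B1 : Ω → α) (lam : Ω → γ) (C : ℝ)
    (hCI : shannonEntropy p (fun ω => (A0 ω, A1 ω, lam ω)) +
        shannonEntropy p (fun ω => (B0 ω, B1 ω, lam ω)) -
        shannonEntropy p (fun ω => (A0 ω, A1 ω, B0 ω, B1 ω, lam ω)) -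
        shannonEntropy p lam = 0)
    (hlam : shannonEntropy p lam ≤ C) :
    -shannonEntropy p (fun ω => (A0 ω, B1 ω)) -
      shannonEntropy p (fun ω => (A1 ω, B0 ω)) +
      shannonEntropy p (fun ω => (A1 ω, B1 ω)) +
      shannonEntropy p A0 + shannonEntropy p B0 ≤ C := by
  have m1 : shannonEntropy p (fun ω => (A1 ω, B1 ω)) ≤
      shannonEntropy p (fun ω => ((A1 ω, B1 ω), lam ω)) :=
    shannonEntropy_le_pair p hp (fun ω => (A1 ω, B1 ω)) lam
  have e1 : shannonEntropy p (fun ω => (A1 ω, B1 ω, lam ω)) =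
      shannonEntropy p (fun ω => ((A1 ω, B1 ω), lam ω)) :=
    ent_eq p (fun t => (t.1.1, t.1.2, t.2)) (fun s => ((s.1, s.2.1), s.2.2))
      (fun _ => rfl) (fun _ => rfl)
  have i2 : shannonEntropy p (fun ω => (A1 ω, B1 ω, lam ω)) + shannonEntropy p lam ≤
      shannonEntropy p (fun ω => (A1 ω, lam ω)) + shannonEntropy p (fun ω => (B1 ω, lam ω)) :=
    shannonEntropy_submod p hp hsum A1 B1 lam
  have i3 : shannonEntropy p (fun ω => (A1 ω, lam ω, B0 ω)) + shannonEntropy p B0 ≤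
      shannonEntropy p (fun ω => (A1 ω, B0 ω)) + shannonEntropy p (fun ω => (lam ω, B0 ω)) :=
    shannonEntropy_submod p hp hsum A1 lam B0
  have e2 : shannonEntropy p (fun ω => (A1 ω, B0 ω, lam ω)) =
      shannonEntropy p (fun ω => (A1 ω, lam ω, B0 ω)) :=
    ent_eq p (fun t => (t.1, t.2.2, t.2.1)) (fun s => (s.1, s.2.2, s.2.1))
      (fun _ => rfl) (fun _ => rfl)
  have e3 : shannonEntropy p (fun ω => (B0 ω, lam ω)) =
      shannonEntropy p (fun ω => (lam ω, B0 ω)) :=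
    ent_eq p (fun t => (t.2, t.1)) (fun s => (s.2, s.1)) (fun _ => rfl) (fun _ => rfl)
  have i4 : shannonEntropy p (fun ω => (B1 ω, lam ω, A0 ω)) + shannonEntropy p A0 ≤
      shannonEntropy p (fun ω => (B1 ω, A0 ω)) + shannonEntropy p (fun ω => (lam ω, A0 ω)) :=
    shannonEntropy_submod p hp hsum B1 lam A0
  have e4 : shannonEntropy p (fun ω => (A0 ω, B1 ω, lam ω)) =
      shannonEntropy p (fun ω => (B1 ω, lam ω, A0 ω)) :=
    ent_eq p (fun t => (t.2.2, t.1, t.2.1)) (fun s => (s.2.1, s.2.2, s.1))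
      (fun _ => rfl) (fun _ => rfl)
  have e5 : shannonEntropy p (fun ω => (A0 ω, B1 ω)) =
      shannonEntropy p (fun ω => (B1 ω, A0 ω)) :=
    ent_eq p (fun t => (t.2, t.1)) (fun s => (s.2, s.1)) (fun _ => rfl) (fun _ => rfl)
  have e6 : shannonEntropy p (fun ω => (A0 ω, lam ω)) =
      shannonEntropy p (fun ω => (lam ω, A0 ω)) :=
    ent_eq p (fun t => (t.2, t.1)) (fun s => (s.2, s.1)) (fun _ => rfl) (fun _ => rfl)
  have i5a : shannonEntropy p (fun ω => (A0 ω, (B0 ω, B1 ω), (A1 ω, lam ω))) +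
      shannonEntropy p (fun ω => (A1 ω, lam ω)) ≤
      shannonEntropy p (fun ω => (A0 ω, A1 ω, lam ω)) +
      shannonEntropy p (fun ω => ((B0 ω, B1 ω), (A1 ω, lam ω))) :=
    shannonEntropy_submod p hp hsum A0 (fun ω => (B0 ω, B1 ω)) (fun ω => (A1 ω, lam ω))
  have e7 : shannonEntropy p (fun ω => (A0 ω, A1 ω, B0 ω, B1 ω, lam ω)) =
      shannonEntropy p (fun ω => (A0 ω, (B0 ω, B1 ω), (A1 ω, lam ω))) :=
    ent_eq p (fun t => (t.1, t.2.2.1, t.2.1.1, t.2.1.2, t.2.2.2))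
      (fun s => (s.1, (s.2.2.1, s.2.2.2.1), (s.2.1, s.2.2.2.2)))
      (fun _ => rfl) (fun _ => rfl)
  have e8 : shannonEntropy p (fun ω => (A1 ω, B0 ω, B1 ω, lam ω)) =
      shannonEntropy p (fun ω => ((B0 ω, B1 ω), (A1 ω, lam ω))) :=
    ent_eq p (fun t => (t.2.1, t.1.1, t.1.2, t.2.2))
      (fun s => ((s.2.1, s.2.2.1), (s.1, s.2.2.2)))
      (fun _ => rfl) (fun _ => rfl)
  have i5b : shannonEntropy p (fun ω => (A1 ω, B1 ω, B0 ω, lam ω)) +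
      shannonEntropy p (fun ω => (B0 ω, lam ω)) ≤
      shannonEntropy p (fun ω => (A1 ω, B0 ω, lam ω)) +
      shannonEntropy p (fun ω => (B1 ω, (B0 ω, lam ω))) :=
    shannonEntropy_submod p hp hsum A1 B1 (fun ω => (B0 ω, lam ω))
  have e9 : shannonEntropy p (fun ω => (A1 ω, B0 ω, B1 ω, lam ω)) =
      shannonEntropy p (fun ω => (A1 ω, B1 ω, B0 ω, lam ω)) :=
    ent_eq p (fun t => (t.1, t.2.2.1, t.2.1, t.2.2.2))
      (fun s => (s.1, s.2.2.1, s.2.1, s.2.2.2))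
      (fun _ => rfl) (fun _ => rfl)
  have e10 : shannonEntropy p (fun ω => (B0 ω, B1 ω, lam ω)) =
      shannonEntropy p (fun ω => (B1 ω, (B0 ω, lam ω))) :=
    ent_eq p (fun t => (t.2.1, t.1, t.2.2)) (fun s => (s.2.1, s.1, s.2.2))
      (fun _ => rfl) (fun _ => rfl)
  have i6a : shannonEntropy p (fun ω => (A1 ω, (B0 ω, B1 ω), (A0 ω, lam ω))) +
      shannonEntropy p (fun ω => (A0 ω, lam ω)) ≤
      shannonEntropy p (fun ω => (A1 ω, A0 ω, lam ω)) +
      shannonEntropy p (fun ω => ((B0 ω, B1 ω), (A0 ω, lam ω))) :=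
    shannonEntropy_submod p hp hsum A1 (fun ω => (B0 ω, B1 ω)) (fun ω => (A0 ω, lam ω))
  have e11 : shannonEntropy p (fun ω => (A0 ω, A1 ω, B0 ω, B1 ω, lam ω)) =
      shannonEntropy p (fun ω => (A1 ω, (B0 ω, B1 ω), (A0 ω, lam ω))) :=
    ent_eq p (fun t => (t.2.2.1, t.1, t.2.1.1, t.2.1.2, t.2.2.2))
      (fun s => (s.2.1, ((s.2.2.1, s.2.2.2.1), (s.1, s.2.2.2.2))))
      (fun _ => rfl) (fun _ => rfl)
  have e12 : shannonEntropy p (fun ω => (A0 ω, A1 ω, lam ω)) =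
      shannonEntropy p (fun ω => (A1 ω, A0 ω, lam ω)) :=
    ent_eq p (fun t => (t.2.1, t.1, t.2.2)) (fun s => (s.2.1, s.1, s.2.2))
      (fun _ => rfl) (fun _ => rfl)
  have e13 : shannonEntropy p (fun ω => (A0 ω, B0 ω, B1 ω, lam ω)) =
      shannonEntropy p (fun ω => ((B0 ω, B1 ω), (A0 ω, lam ω))) :=
    ent_eq p (fun t => (t.2.1, t.1.1, t.1.2, t.2.2))
      (fun s => ((s.2.1, s.2.2.1), (s.1, s.2.2.2)))
      (fun _ => rfl) (fun _ => rfl)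
  have i6b : shannonEntropy p (fun ω => (A0 ω, B0 ω, B1 ω, lam ω)) +
      shannonEntropy p (fun ω => (B1 ω, lam ω)) ≤
      shannonEntropy p (fun ω => (A0 ω, B1 ω, lam ω)) +
      shannonEntropy p (fun ω => (B0 ω, B1 ω, lam ω)) :=
    shannonEntropy_submod p hp hsum A0 B0 (fun ω => (B1 ω, lam ω))
  linarith [m1, e1, i2, i3, e2, e3, i4, e4, e5, e6, i5a, e7, e8, i5b, e9, e10,
    i6a, e11, e12, e13, i6b, hCI, hlam]
end

section
/- Triangle causal-structure inequality: let $A,B,C,\lambda_1,\lambda_2,\lambda_3$ be jointly distributed discrete random variables such that $\lambda_1,\lambda_2,\lambda_3$ are mutually independent, $A$ is a deterministic function of $(\lambda_1,\lambda_2)$, $B$ of $(\lambda_1,\lambda_3)$, and $C$ of $(\lambda_2,\lambda_3)$. Then $I(A:B)+I(A:C)\leq H(A)$. -/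
open Finset

namespace TriangleAux

open Real

lemma gibbs {ι : Type*} (s : Finset ι) (P Q : ι → ℝ) (hP : ∀ i ∈ s, 0 ≤ P i)
    (hQ : ∀ i ∈ s, 0 ≤ Q i) (hPQ : ∀ i ∈ s, P i ≠ 0 → Q i ≠ 0)
    (hsum : ∑ i ∈ s, Q i ≤ ∑ i ∈ s, P i) :
    ∑ i ∈ s, P i * Real.log (Q i) ≤ ∑ i ∈ s, P i * Real.log (P i) := by
  have key : ∀ i ∈ s, P i * Real.log (Q i) - P i * Real.log (P i) ≤ Q i - P i := by
    intro i hi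
    rcases eq_or_lt_of_le (hP i hi) with h0 | h0
    · rw [← h0]
      simpa using hQ i hi
    · have hQ0 : 0 < Q i := (hQ i hi).lt_of_ne (Ne.symm (hPQ i hi (ne_of_gt h0)))
      have hlog := Real.log_le_sub_one_of_pos (div_pos hQ0 h0)
      rw [Real.log_div hQ0.ne' h0.ne'] at hlog
      have h2 := mul_le_mul_of_nonneg_left hlog (le_of_lt h0)
      calc P i * Real.log (Q i) - P i * Real.log (P i)
          = P i * (Real.log (Q i) - Real.log (P i)) := by ring
        _ ≤ P i * (Q i / P i - 1) := h2
        _ = Q i - P i := by field_simp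
  have h3 := Finset.sum_le_sum key
  rw [Finset.sum_sub_distrib, Finset.sum_sub_distrib] at h3
  linarith

lemma negMulLog_sum_le {ι : Type*} (s : Finset ι) (f : ι → ℝ) (hf : ∀ i ∈ s, 0 ≤ f i) :
    Real.negMulLog (∑ i ∈ s, f i) ≤ ∑ i ∈ s, Real.negMulLog (f i) := by
  have hS : Real.negMulLog (∑ i ∈ s, f i) =
      ∑ i ∈ s, -(f i * Real.log (∑ j ∈ s, f j)) := by
    rw [Real.negMulLog, neg_mul, Finset.sum_mul, ← Finset.sum_neg_distrib]
  rw [hS]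
  refine Finset.sum_le_sum fun i hi => ?_
  rcases eq_or_lt_of_le (hf i hi) with h0 | h0
  · rw [← h0]; simp
  · have hle : f i ≤ ∑ j ∈ s, f j := Finset.single_le_sum hf hi
    have := Real.log_le_log h0 hle
    rw [Real.negMulLog, neg_mul]
    nlinarith

lemma sum_triple {α β γ M : Type*} [Fintype α] [Fintype β] [Fintype γ] [AddCommMonoid M]
    (f : α × β × γ → M) :
    ∑ v : α × β × γ, f v = ∑ z : γ, ∑ x : α, ∑ y : β, f (x, y, z) := by
  rw [Fintype.sum_prod_type]
  calc ∑ x, ∑ v : β × γ, f (x, v) = ∑ x, ∑ y, ∑ z, f (x, y, z) :=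
        Finset.sum_congr rfl fun x _ => Fintype.sum_prod_type _
    _ = ∑ x, ∑ z, ∑ y, f (x, y, z) := Finset.sum_congr rfl fun x _ => Finset.sum_comm
    _ = ∑ z, ∑ x, ∑ y, f (x, y, z) := Finset.sum_comm

variable {Ω : Type*} [Fintype Ω] (p : Ω → ℝ)

/-- fiber mass of `X` at `x` -/
noncomputable def mass {α : Type*} [DecidableEq α] (X : Ω → α) (x : α) : ℝ :=
  ∑ ω ∈ Finset.univ.filter (fun ω => X ω = x), p ω

lemma shannonEntropy_eq {α : Type*} [Fintype α] [DecidableEq α] (X : Ω → α) :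
    shannonEntropy p X = ∑ x : α, Real.negMulLog (mass p X x) := rfl

lemma mass_nonneg (hp : ∀ ω, 0 ≤ p ω) {α : Type*} [DecidableEq α] (X : Ω → α) (x : α) :
    0 ≤ mass p X x :=
  Finset.sum_nonneg fun ω _ => hp ω

lemma sum_mass {α : Type*} [Fintype α] [DecidableEq α] (X : Ω → α) :
    ∑ x : α, mass p X x = ∑ ω, p ω :=
  Finset.sum_fiberwise _ _ _

lemma mass_pair_fst {α β : Type*} [Fintype β] [DecidableEq α] [DecidableEq β]
    (X : Ω → α) (Y : Ω → β) (x : α) :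
    ∑ y : β, mass p (fun ω => (X ω, Y ω)) (x, y) = mass p X x := by
  unfold mass
  rw [← Finset.sum_fiberwise (Finset.univ.filter (fun ω => X ω = x)) Y p]
  refine Finset.sum_congr rfl fun y _ => Finset.sum_congr ?_ fun _ _ => rfl
  ext ω
  simp only [Finset.mem_filter, Finset.mem_univ, true_and, Prod.mk.injEq, Finset.filter_filter]
  try tauto

lemma mass_pair_snd {α β : Type*} [Fintype α] [DecidableEq α] [DecidableEq β]
    (X : Ω → α) (Y : Ω → β) (y : β) :
    ∑ x : α, mass p (fun ω => (X ω, Y ω)) (x, y) = mass p Y y := by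
  unfold mass
  rw [← Finset.sum_fiberwise (Finset.univ.filter (fun ω => Y ω = y)) X p]
  refine Finset.sum_congr rfl fun x _ => Finset.sum_congr ?_ fun _ _ => rfl
  ext ω
  simp only [Finset.mem_filter, Finset.mem_univ, true_and, Prod.mk.injEq, Finset.filter_filter]
  try tauto

lemma mass_triple_mid {α β γ : Type*} [Fintype β] [DecidableEq α] [DecidableEq β] [DecidableEq γ]
    (X : Ω → α) (Y : Ω → β) (Z : Ω → γ) (x : α) (z : γ) :
    ∑ y : β, mass p (fun ω => (X ω, Y ω, Z ω)) (x, y, z) =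
      mass p (fun ω => (X ω, Z ω)) (x, z) := by
  unfold mass
  rw [← Finset.sum_fiberwise (Finset.univ.filter (fun ω => (X ω, Z ω) = (x, z))) Y p]
  refine Finset.sum_congr rfl fun y _ => Finset.sum_congr ?_ fun _ _ => rfl
  ext ω
  simp only [Finset.mem_filter, Finset.mem_univ, true_and, Prod.mk.injEq, Finset.filter_filter]
  try tauto

lemma relabel {α β : Type*} [Fintype α] [DecidableEq α] [Fintype β] [DecidableEq β]
    (X : Ω → α) (e : α → β) (he : Function.Injective e) :
    shannonEntropy p (fun ω => e (X ω)) = shannonEntropy p X := by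
  rw [shannonEntropy_eq, shannonEntropy_eq]
  have h0 : ∀ y ∈ (Finset.univ : Finset β), y ∉ Finset.univ.image e →
      Real.negMulLog (mass p (fun ω => e (X ω)) y) = 0 := by
    intro y _ hy
    have hm : mass p (fun ω => e (X ω)) y = 0 := by
      unfold mass
      convert Finset.sum_empty
      ext ω
      simp only [Finset.mem_filter, Finset.mem_univ, true_and, Finset.notMem_empty, iff_false]
      intro h
      exact hy (Finset.mem_image.2 ⟨X ω, Finset.mem_univ _, h⟩)
    rw [hm, Real.negMulLog_zero]
  rw [← Finset.sum_subset (Finset.subset_univ (Finset.univ.image e)) h0,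
    Finset.sum_image (fun x _ y _ h => he h)]
  refine Finset.sum_congr rfl fun x _ => ?_
  congr 1
  unfold mass
  refine Finset.sum_congr ?_ fun _ _ => rfl
  ext ω
  simp [he.eq_iff]

lemma mono (hp : ∀ ω, 0 ≤ p ω) {α β : Type*} [Fintype α] [DecidableEq α]
    [Fintype β] [DecidableEq β] (X : Ω → α) (Y : Ω → β) :
    shannonEntropy p X ≤ shannonEntropy p (fun ω => (X ω, Y ω)) := by
  rw [shannonEntropy_eq, shannonEntropy_eq, Fintype.sum_prod_type]
  refine Finset.sum_le_sum fun x _ => ?_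
  rw [← mass_pair_fst p X Y x]
  exact negMulLog_sum_le _ _ fun y _ => mass_nonneg p hp _ _

lemma mono_right (hp : ∀ ω, 0 ≤ p ω) {α β : Type*} [Fintype α] [DecidableEq α]
    [Fintype β] [DecidableEq β] (X : Ω → α) (Y : Ω → β) :
    shannonEntropy p Y ≤ shannonEntropy p (fun ω => (X ω, Y ω)) := by
  have hswap : shannonEntropy p (fun ω => (X ω, Y ω)) =
      shannonEntropy p (fun ω => (Y ω, X ω)) :=
    relabel p (fun ω => (Y ω, X ω)) (fun v => (v.2, v.1))
      (fun v w h => by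
        simp only [Prod.mk.injEq] at h
        exact Prod.ext h.2 h.1)
  rw [hswap]
  exact mono p hp Y X


lemma submod (hp : ∀ ω, 0 ≤ p ω) (hsum : ∑ ω, p ω = 1)
    {α β γ : Type*} [Fintype α] [DecidableEq α] [Fintype β] [DecidableEq β]
    [Fintype γ] [DecidableEq γ] (X : Ω → α) (Y : Ω → β) (Z : Ω → γ) :
    shannonEntropy p (fun ω => (X ω, Y ω, Z ω)) + shannonEntropy p Z ≤
      shannonEntropy p (fun ω => (X ω, Z ω)) + shannonEntropy p (fun ω => (Y ω, Z ω)) := by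
  classical
  set r : α × β × γ → ℝ := mass p (fun ω => (X ω, Y ω, Z ω)) with hrdef
  have hr0 : ∀ v : α × β × γ, 0 ≤ r v := fun v => mass_nonneg p hp _ _
  -- marginal identities
  have hXZ : ∀ x z, mass p (fun ω => (X ω, Z ω)) (x, z) = ∑ y, r (x, y, z) :=
    fun x z => (mass_triple_mid p X Y Z x z).symm
  have hYZ : ∀ y z, mass p (fun ω => (Y ω, Z ω)) (y, z) = ∑ x, r (x, y, z) :=
    fun y z => (mass_pair_snd p X (fun ω => (Y ω, Z ω)) (y, z)).symm
  have hZZ : ∀ z, mass p Z z = ∑ x, ∑ y, r (x, y, z) := by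
    intro z
    rw [← mass_pair_snd p X Z z]
    exact Finset.sum_congr rfl fun x _ => hXZ x z
  have hXZsum : ∀ z, ∑ x, mass p (fun ω => (X ω, Z ω)) (x, z) = mass p Z z :=
    fun z => mass_pair_snd p X Z z
  have hYZsum : ∀ z, ∑ y, mass p (fun ω => (Y ω, Z ω)) (y, z) = mass p Z z :=
    fun z => mass_pair_snd p Y Z z
  -- nonnegativity of marginals
  have hXZ0 : ∀ x z, 0 ≤ mass p (fun ω => (X ω, Z ω)) (x, z) := fun x z => mass_nonneg p hp _ _
  have hYZ0 : ∀ y z, 0 ≤ mass p (fun ω => (Y ω, Z ω)) (y, z) := fun y z => mass_nonneg p hp _ _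
  have hZ0 : ∀ z, 0 ≤ mass p Z z := fun z => mass_nonneg p hp _ _
  -- pointwise domination of the joint mass by its marginals
  have hrXZ : ∀ x y z, r (x, y, z) ≤ mass p (fun ω => (X ω, Z ω)) (x, z) := by
    intro x y z
    rw [hXZ]
    exact Finset.single_le_sum (f := fun y' => r (x, y', z)) (fun i _ => hr0 _) (Finset.mem_univ y)
  have hrYZ : ∀ x y z, r (x, y, z) ≤ mass p (fun ω => (Y ω, Z ω)) (y, z) := by
    intro x y z
    rw [hYZ]
    exact Finset.single_le_sum (f := fun x' => r (x', y, z)) (fun i _ => hr0 _) (Finset.mem_univ x)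
  have hrZ : ∀ x y z, r (x, y, z) ≤ mass p Z z := by
    intro x y z
    calc r (x, y, z) ≤ mass p (fun ω => (X ω, Z ω)) (x, z) := hrXZ x y z
      _ ≤ ∑ x', mass p (fun ω => (X ω, Z ω)) (x', z) :=
          Finset.single_le_sum (fun i _ => hXZ0 i z) (Finset.mem_univ x)
      _ = mass p Z z := hXZsum z
  -- the comparison distribution
  set Q : α × β × γ → ℝ := fun v =>
    if mass p Z v.2.2 = 0 then 0 else
      mass p (fun ω => (X ω, Z ω)) (v.1, v.2.2) * mass p (fun ω => (Y ω, Z ω)) (v.2.1, v.2.2) /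
        mass p Z v.2.2 with hQdef
  have hQ0 : ∀ v : α × β × γ, 0 ≤ Q v := by
    intro v
    rw [hQdef]
    dsimp only
    split
    · exact le_refl 0
    · exact div_nonneg (mul_nonneg (hXZ0 _ _) (hYZ0 _ _)) (hZ0 _)
  have hPQ : ∀ v : α × β × γ, r v ≠ 0 → Q v ≠ 0 := by
    rintro ⟨x, y, z⟩ hv
    have hrpos : 0 < r (x, y, z) := (hr0 _).lt_of_ne (Ne.symm hv)
    have h1 : 0 < mass p (fun ω => (X ω, Z ω)) (x, z) := lt_of_lt_of_le hrpos (hrXZ x y z)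
    have h2 : 0 < mass p (fun ω => (Y ω, Z ω)) (y, z) := lt_of_lt_of_le hrpos (hrYZ x y z)
    have h3 : 0 < mass p Z z := lt_of_lt_of_le hrpos (hrZ x y z)
    rw [hQdef]
    dsimp only
    rw [if_neg h3.ne']
    exact (div_pos (mul_pos h1 h2) h3).ne'
  have hsumP : ∑ v : α × β × γ, r v = 1 := by
    rw [hrdef]
    rw [sum_mass p (fun ω => (X ω, Y ω, Z ω))]
    exact hsum
  have hsumZ : ∑ z : γ, mass p Z z = 1 := by
    rw [sum_mass p Z]; exact hsum
  have hsumQ : ∑ v : α × β × γ, Q v ≤ 1 := by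
    rw [sum_triple Q]
    have hz : ∀ z : γ, ∑ x : α, ∑ y : β, Q (x, y, z) ≤ mass p Z z := by
      intro z
      by_cases h : mass p Z z = 0
      · have : ∀ x : α, ∀ y : β, Q (x, y, z) = 0 := by
          intro x y
          rw [hQdef]
          dsimp only
          rw [if_pos h]
        simp only [this, Finset.sum_const_zero]
        exact hZ0 z
      · have hq : ∀ x : α, ∀ y : β, Q (x, y, z) =
            mass p (fun ω => (X ω, Z ω)) (x, z) * mass p (fun ω => (Y ω, Z ω)) (y, z) /
              mass p Z z := by
          intro x y
          rw [hQdef]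
          dsimp only
          rw [if_neg h]
        refine le_of_eq ?_
        calc ∑ x : α, ∑ y : β, Q (x, y, z)
            = ∑ x : α, ∑ y : β, mass p (fun ω => (X ω, Z ω)) (x, z) *
                mass p (fun ω => (Y ω, Z ω)) (y, z) / mass p Z z :=
              Finset.sum_congr rfl fun x _ => Finset.sum_congr rfl fun y _ => hq x y
          _ = (∑ x : α, mass p (fun ω => (X ω, Z ω)) (x, z)) *
                (∑ y : β, mass p (fun ω => (Y ω, Z ω)) (y, z)) / mass p Z z := by
              rw [Finset.sum_mul, Finset.sum_div]
              refine Finset.sum_congr rfl fun x _ => ?_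
              rw [Finset.mul_sum, Finset.sum_div]
          _ = mass p Z z * mass p Z z / mass p Z z := by rw [hXZsum z, hYZsum z]
          _ = mass p Z z := by field_simp
    calc ∑ z : γ, ∑ x : α, ∑ y : β, Q (x, y, z) ≤ ∑ z : γ, mass p Z z :=
          Finset.sum_le_sum fun z _ => hz z
      _ = 1 := hsumZ
  -- Gibbs
  have hgibbs := gibbs Finset.univ r Q (fun v _ => hr0 v) (fun v _ => hQ0 v)
    (fun v _ => hPQ v) (by rw [hsumP]; exact hsumQ)
  -- rewrite r * log Q pointwise
  have hlogQ : ∑ v : α × β × γ, r v * Real.log (Q v) =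
      (∑ v : α × β × γ, r v * Real.log (mass p (fun ω => (X ω, Z ω)) (v.1, v.2.2))) +
      (∑ v : α × β × γ, r v * Real.log (mass p (fun ω => (Y ω, Z ω)) (v.2.1, v.2.2))) -
      (∑ v : α × β × γ, r v * Real.log (mass p Z v.2.2)) := by
    rw [← Finset.sum_add_distrib, ← Finset.sum_sub_distrib]
    refine Finset.sum_congr rfl fun v _ => ?_
    obtain ⟨x, y, z⟩ := v
    by_cases hv : r (x, y, z) = 0
    · rw [hv]; ring
    · have hrpos : 0 < r (x, y, z) := (hr0 _).lt_of_ne (Ne.symm hv)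
      have h1 : 0 < mass p (fun ω => (X ω, Z ω)) (x, z) := lt_of_lt_of_le hrpos (hrXZ x y z)
      have h2 : 0 < mass p (fun ω => (Y ω, Z ω)) (y, z) := lt_of_lt_of_le hrpos (hrYZ x y z)
      have h3 : 0 < mass p Z z := lt_of_lt_of_le hrpos (hrZ x y z)
      have hq : Q (x, y, z) =
          mass p (fun ω => (X ω, Z ω)) (x, z) * mass p (fun ω => (Y ω, Z ω)) (y, z) /
            mass p Z z := by
        rw [hQdef]
        dsimp only
        rw [if_neg h3.ne']
      rw [hq, Real.log_div (mul_pos h1 h2).ne' h3.ne', Real.log_mul h1.ne' h2.ne']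
      ring
  -- express the four entropies as triple sums
  have E1 : shannonEntropy p (fun ω => (X ω, Y ω, Z ω)) =
      -∑ v : α × β × γ, r v * Real.log (r v) := by
    rw [shannonEntropy_eq, ← Finset.sum_neg_distrib]
    exact Finset.sum_congr rfl fun v _ => by rw [Real.negMulLog]; ring
  have E2 : shannonEntropy p Z = -∑ v : α × β × γ, r v * Real.log (mass p Z v.2.2) := by
    rw [shannonEntropy_eq, sum_triple (fun v => r v * Real.log (mass p Z v.2.2))]
    rw [← Finset.sum_neg_distrib]
    refine Finset.sum_congr rfl fun z _ => ?_
    have : ∑ x : α, ∑ y : β, r (x, y, z) * Real.log (mass p Z z) =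
        mass p Z z * Real.log (mass p Z z) := by
      simp only [← Finset.sum_mul]
      rw [← hZZ z]
    rw [this, Real.negMulLog]
    ring
  have E3 : shannonEntropy p (fun ω => (X ω, Z ω)) =
      -∑ v : α × β × γ, r v * Real.log (mass p (fun ω => (X ω, Z ω)) (v.1, v.2.2)) := by
    rw [shannonEntropy_eq,
      sum_triple (fun v => r v * Real.log (mass p (fun ω => (X ω, Z ω)) (v.1, v.2.2)))]
    rw [Fintype.sum_prod_type, ← Finset.sum_neg_distrib]
    rw [Finset.sum_comm]
    refine Finset.sum_congr rfl fun z _ => ?_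
    rw [← Finset.sum_neg_distrib]
    refine Finset.sum_congr rfl fun x _ => ?_
    have : ∑ y : β, r (x, y, z) * Real.log (mass p (fun ω => (X ω, Z ω)) (x, z)) =
        mass p (fun ω => (X ω, Z ω)) (x, z) *
          Real.log (mass p (fun ω => (X ω, Z ω)) (x, z)) := by
      rw [← Finset.sum_mul, ← hXZ]
    rw [this, Real.negMulLog]
    ring
  have E4 : shannonEntropy p (fun ω => (Y ω, Z ω)) =
      -∑ v : α × β × γ, r v * Real.log (mass p (fun ω => (Y ω, Z ω)) (v.2.1, v.2.2)) := by
    rw [shannonEntropy_eq,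
      sum_triple (fun v => r v * Real.log (mass p (fun ω => (Y ω, Z ω)) (v.2.1, v.2.2)))]
    rw [← Finset.sum_neg_distrib, Fintype.sum_prod_type, Finset.sum_comm]
    refine Finset.sum_congr rfl fun z _ => ?_
    rw [Finset.sum_comm, ← Finset.sum_neg_distrib]
    refine Finset.sum_congr rfl fun y _ => ?_
    dsimp only
    rw [← Finset.sum_mul, ← hYZ, Real.negMulLog]
    ring
  rw [E1, E2, E3, E4]
  rw [hlogQ] at hgibbs
  linarith

lemma subadd (hp : ∀ ω, 0 ≤ p ω) (hsum : ∑ ω, p ω = 1)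
    {α β : Type*} [Fintype α] [DecidableEq α] [Fintype β] [DecidableEq β]
    (X : Ω → α) (Y : Ω → β) :
    shannonEntropy p (fun ω => (X ω, Y ω)) ≤ shannonEntropy p X + shannonEntropy p Y := by
  have h : shannonEntropy p (fun ω => (X ω, Y ω, ())) + shannonEntropy p (fun _ : Ω => ()) ≤
      shannonEntropy p (fun ω => (X ω, ())) + shannonEntropy p (fun ω => (Y ω, ())) :=
    submod p hp hsum X Y (fun _ => ())
  have hunit : shannonEntropy p (fun _ : Ω => ()) = 0 := by
    rw [shannonEntropy_eq]
    have hm : mass p (fun _ : Ω => ()) () = 1 := by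
      unfold mass
      simp [hsum]
    simp [hm]
  have e1 : shannonEntropy p (fun ω => (X ω, Y ω, ())) =
      shannonEntropy p (fun ω => (X ω, Y ω)) :=
    relabel p (fun ω => (X ω, Y ω)) (fun v => (v.1, v.2, ()))
      (fun v w hvw => by
        simp only [Prod.mk.injEq] at hvw
        simp only [Prod.ext_iff]
        tauto)
  have e2 : shannonEntropy p (fun ω => (X ω, ())) = shannonEntropy p X :=
    relabel p X (fun x => (x, ())) (fun v w hvw => by
      simpa using congrArg Prod.fst hvw)
  have e3 : shannonEntropy p (fun ω => (Y ω, ())) = shannonEntropy p Y :=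
    relabel p Y (fun y => (y, ())) (fun v w hvw => by
      simpa using congrArg Prod.fst hvw)
  linarith

end TriangleAux
/-- Triangle causal-structure inequality: if `λ₁, λ₂, λ₃` are mutually independent
(`H(λ₁,λ₂,λ₃) = H(λ₁)+H(λ₂)+H(λ₃)`) and `A`, `B`, `C` are deterministic functions of
`(λ₁,λ₂)`, `(λ₁,λ₃)`, `(λ₂,λ₃)` respectively (expressed entropically as
`H(A|λ₁,λ₂)=0` etc.), then `I(A:B) + I(A:C) ≤ H(A)`. -/
theorem triangle_causal_inequality {Ω α β γ δ₁ δ₂ δ₃ : Type*} [Fintype Ω]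
    [Fintype α] [DecidableEq α] [Fintype β] [DecidableEq β] [Fintype γ] [DecidableEq γ]
    [Fintype δ₁] [DecidableEq δ₁] [Fintype δ₂] [DecidableEq δ₂]
    [Fintype δ₃] [DecidableEq δ₃]
    (p : Ω → ℝ) (hp : ∀ ω, 0 ≤ p ω) (hsum : ∑ ω, p ω = 1)
    (A : Ω → α) (B : Ω → β) (C : Ω → γ)
    (l1 : Ω → δ₁) (l2 : Ω → δ₂) (l3 : Ω → δ₃)
    (hind : shannonEntropy p (fun ω => (l1 ω, l2 ω, l3 ω)) =
      shannonEntropy p l1 + shannonEntropy p l2 + shannonEntropy p l3)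
    (hA : shannonEntropy p (fun ω => (A ω, l1 ω, l2 ω)) =
      shannonEntropy p (fun ω => (l1 ω, l2 ω)))
    (hB : shannonEntropy p (fun ω => (B ω, l1 ω, l3 ω)) =
      shannonEntropy p (fun ω => (l1 ω, l3 ω)))
    (hC : shannonEntropy p (fun ω => (C ω, l2 ω, l3 ω)) =
      shannonEntropy p (fun ω => (l2 ω, l3 ω))) :
    (shannonEntropy p A + shannonEntropy p B -
        shannonEntropy p (fun ω => (A ω, B ω))) +
      (shannonEntropy p A + shannonEntropy p C -
        shannonEntropy p (fun ω => (A ω, C ω))) ≤ shannonEntropy p A := by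
  classical
  -- relabeling (tuple reshuffling) equalities
  have R1 : shannonEntropy p (fun ω => (l1 ω, l2 ω, l3 ω)) =
      shannonEntropy p (fun ω => ((l1 ω, l2 ω), l3 ω)) :=
    TriangleAux.relabel p (fun ω => ((l1 ω, l2 ω), l3 ω)) (fun v => (v.1.1, v.1.2, v.2))
      (by intro v w hvw; simp only [Prod.mk.injEq] at hvw; simp only [Prod.ext_iff]; tauto)
  have R2 : shannonEntropy p (fun ω => (l1 ω, l2 ω, l3 ω)) =
      shannonEntropy p (fun ω => ((l1 ω, l3 ω), l2 ω)) :=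
    TriangleAux.relabel p (fun ω => ((l1 ω, l3 ω), l2 ω)) (fun v => (v.1.1, v.2, v.1.2))
      (by intro v w hvw; simp only [Prod.mk.injEq] at hvw; simp only [Prod.ext_iff]; tauto)
  have R3 : shannonEntropy p (fun ω => (A ω, l1 ω, l2 ω, l3 ω)) =
      shannonEntropy p (fun ω => (l3 ω, A ω, l1 ω, l2 ω)) :=
    TriangleAux.relabel p (fun ω => (l3 ω, A ω, l1 ω, l2 ω))
      (fun v => (v.2.1, v.2.2.1, v.2.2.2, v.1))
      (by intro v w hvw; simp only [Prod.mk.injEq] at hvw; simp only [Prod.ext_iff]; tauto)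
  have R4 : shannonEntropy p (fun ω => (l1 ω, l2 ω, l3 ω)) =
      shannonEntropy p (fun ω => (l3 ω, l1 ω, l2 ω)) :=
    TriangleAux.relabel p (fun ω => (l3 ω, l1 ω, l2 ω)) (fun v => (v.2.1, v.2.2, v.1))
      (by intro v w hvw; simp only [Prod.mk.injEq] at hvw; simp only [Prod.ext_iff]; tauto)
  have R5 : shannonEntropy p (fun ω => (A ω, B ω, l1 ω, l3 ω)) =
      shannonEntropy p (fun ω => (A ω, (l1 ω, l3 ω), B ω)) :=
    TriangleAux.relabel p (fun ω => (A ω, (l1 ω, l3 ω), B ω))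
      (fun v => (v.1, v.2.2, v.2.1.1, v.2.1.2))
      (by intro v w hvw; simp only [Prod.mk.injEq] at hvw; simp only [Prod.ext_iff]; tauto)
  have R6 : shannonEntropy p (fun ω => (B ω, l1 ω, l3 ω)) =
      shannonEntropy p (fun ω => ((l1 ω, l3 ω), B ω)) :=
    TriangleAux.relabel p (fun ω => ((l1 ω, l3 ω), B ω)) (fun v => (v.2, v.1.1, v.1.2))
      (by intro v w hvw; simp only [Prod.mk.injEq] at hvw; simp only [Prod.ext_iff]; tauto)
  have R7 : shannonEntropy p (fun ω => (A ω, B ω, l1 ω, l3 ω)) =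
      shannonEntropy p (fun ω => ((A ω, l1 ω, l3 ω), B ω)) :=
    TriangleAux.relabel p (fun ω => ((A ω, l1 ω, l3 ω), B ω))
      (fun v => (v.1.1, v.2, v.1.2.1, v.1.2.2))
      (by intro v w hvw; simp only [Prod.mk.injEq] at hvw; simp only [Prod.ext_iff]; tauto)
  have R8 : shannonEntropy p (fun ω => (A ω, l1 ω, l2 ω, l3 ω)) =
      shannonEntropy p (fun ω => (l3 ω, l2 ω, A ω, l1 ω)) :=
    TriangleAux.relabel p (fun ω => (l3 ω, l2 ω, A ω, l1 ω))
      (fun v => (v.2.2.1, v.2.2.2, v.2.1, v.1))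
      (by intro v w hvw; simp only [Prod.mk.injEq] at hvw; simp only [Prod.ext_iff]; tauto)
  have R9 : shannonEntropy p (fun ω => (A ω, l1 ω, l3 ω)) =
      shannonEntropy p (fun ω => (l3 ω, A ω, l1 ω)) :=
    TriangleAux.relabel p (fun ω => (l3 ω, A ω, l1 ω)) (fun v => (v.2.1, v.2.2, v.1))
      (by intro v w hvw; simp only [Prod.mk.injEq] at hvw; simp only [Prod.ext_iff]; tauto)
  have R10 : shannonEntropy p (fun ω => (A ω, l1 ω, l2 ω)) =
      shannonEntropy p (fun ω => (l2 ω, A ω, l1 ω)) :=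
    TriangleAux.relabel p (fun ω => (l2 ω, A ω, l1 ω)) (fun v => (v.2.1, v.2.2, v.1))
      (by intro v w hvw; simp only [Prod.mk.injEq] at hvw; simp only [Prod.ext_iff]; tauto)
  have R11 : shannonEntropy p (fun ω => (A ω, C ω, l2 ω, l3 ω)) =
      shannonEntropy p (fun ω => (A ω, (l2 ω, l3 ω), C ω)) :=
    TriangleAux.relabel p (fun ω => (A ω, (l2 ω, l3 ω), C ω))
      (fun v => (v.1, v.2.2, v.2.1.1, v.2.1.2))
      (by intro v w hvw; simp only [Prod.mk.injEq] at hvw; simp only [Prod.ext_iff]; tauto)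
  have R12 : shannonEntropy p (fun ω => (C ω, l2 ω, l3 ω)) =
      shannonEntropy p (fun ω => ((l2 ω, l3 ω), C ω)) :=
    TriangleAux.relabel p (fun ω => ((l2 ω, l3 ω), C ω)) (fun v => (v.2, v.1.1, v.1.2))
      (by intro v w hvw; simp only [Prod.mk.injEq] at hvw; simp only [Prod.ext_iff]; tauto)
  have R13 : shannonEntropy p (fun ω => (A ω, C ω, l2 ω, l3 ω)) =
      shannonEntropy p (fun ω => ((A ω, l2 ω, l3 ω), C ω)) :=
    TriangleAux.relabel p (fun ω => ((A ω, l2 ω, l3 ω), C ω))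
      (fun v => (v.1.1, v.2, v.1.2.1, v.1.2.2))
      (by intro v w hvw; simp only [Prod.mk.injEq] at hvw; simp only [Prod.ext_iff]; tauto)
  have R14 : shannonEntropy p (fun ω => (A ω, l1 ω, l2 ω, l3 ω)) =
      shannonEntropy p (fun ω => (l3 ω, l1 ω, A ω, l2 ω)) :=
    TriangleAux.relabel p (fun ω => (l3 ω, l1 ω, A ω, l2 ω))
      (fun v => (v.2.2.1, v.2.1, v.2.2.2, v.1))
      (by intro v w hvw; simp only [Prod.mk.injEq] at hvw; simp only [Prod.ext_iff]; tauto)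
  have R15 : shannonEntropy p (fun ω => (A ω, l2 ω, l3 ω)) =
      shannonEntropy p (fun ω => (l3 ω, A ω, l2 ω)) :=
    TriangleAux.relabel p (fun ω => (l3 ω, A ω, l2 ω)) (fun v => (v.2.1, v.2.2, v.1))
      (by intro v w hvw; simp only [Prod.mk.injEq] at hvw; simp only [Prod.ext_iff]; tauto)
  have R16 : shannonEntropy p (fun ω => (A ω, l1 ω, l2 ω)) =
      shannonEntropy p (fun ω => (l1 ω, A ω, l2 ω)) :=
    TriangleAux.relabel p (fun ω => (l1 ω, A ω, l2 ω)) (fun v => (v.2.1, v.1, v.2.2))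
      (by intro v w hvw; simp only [Prod.mk.injEq] at hvw; simp only [Prod.ext_iff]; tauto)
  have R17 : shannonEntropy p (fun ω => (A ω, l1 ω, l2 ω)) =
      shannonEntropy p (fun ω => (l2 ω, l1 ω, A ω)) :=
    TriangleAux.relabel p (fun ω => (l2 ω, l1 ω, A ω)) (fun v => (v.2.2, v.2.1, v.1))
      (by intro v w hvw; simp only [Prod.mk.injEq] at hvw; simp only [Prod.ext_iff]; tauto)
  have R18 : shannonEntropy p (fun ω => (A ω, l2 ω)) =
      shannonEntropy p (fun ω => (l2 ω, A ω)) :=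
    TriangleAux.relabel p (fun ω => (l2 ω, A ω)) (fun v => (v.2, v.1))
      (by intro v w hvw; simp only [Prod.mk.injEq] at hvw; simp only [Prod.ext_iff]; tauto)
  have R19 : shannonEntropy p (fun ω => (A ω, l1 ω)) =
      shannonEntropy p (fun ω => (l1 ω, A ω)) :=
    TriangleAux.relabel p (fun ω => (l1 ω, A ω)) (fun v => (v.2, v.1))
      (by intro v w hvw; simp only [Prod.mk.injEq] at hvw; simp only [Prod.ext_iff]; tauto)
  -- subadditivity (used to split the independence hypothesis pairwise)
  have F1 : shannonEntropy p (fun ω => (l1 ω, l2 ω, l3 ω)) ≤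
      shannonEntropy p l1 + shannonEntropy p (fun ω => (l2 ω, l3 ω)) :=
    TriangleAux.subadd p hp hsum l1 (fun ω => (l2 ω, l3 ω))
  have F2 : shannonEntropy p (fun ω => (l2 ω, l3 ω)) ≤
      shannonEntropy p l2 + shannonEntropy p l3 :=
    TriangleAux.subadd p hp hsum l2 l3
  have F3 : shannonEntropy p (fun ω => ((l1 ω, l2 ω), l3 ω)) ≤
      shannonEntropy p (fun ω => (l1 ω, l2 ω)) + shannonEntropy p l3 :=
    TriangleAux.subadd p hp hsum (fun ω => (l1 ω, l2 ω)) l3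
  have F4 : shannonEntropy p (fun ω => (l1 ω, l2 ω)) ≤
      shannonEntropy p l1 + shannonEntropy p l2 :=
    TriangleAux.subadd p hp hsum l1 l2
  have F5 : shannonEntropy p (fun ω => ((l1 ω, l3 ω), l2 ω)) ≤
      shannonEntropy p (fun ω => (l1 ω, l3 ω)) + shannonEntropy p l2 :=
    TriangleAux.subadd p hp hsum (fun ω => (l1 ω, l3 ω)) l2
  have F6 : shannonEntropy p (fun ω => (l1 ω, l3 ω)) ≤
      shannonEntropy p l1 + shannonEntropy p l3 :=
    TriangleAux.subadd p hp hsum l1 l3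
  -- determinism extension: H(A,λ1,λ2,λ3) = H(λ1,λ2,λ3)
  have F7 : shannonEntropy p (fun ω => (l1 ω, l2 ω, l3 ω)) ≤
      shannonEntropy p (fun ω => (A ω, l1 ω, l2 ω, l3 ω)) :=
    TriangleAux.mono_right p hp A (fun ω => (l1 ω, l2 ω, l3 ω))
  have F8 : shannonEntropy p (fun ω => (l3 ω, A ω, l1 ω, l2 ω)) +
      shannonEntropy p (fun ω => (l1 ω, l2 ω)) ≤
      shannonEntropy p (fun ω => (l3 ω, l1 ω, l2 ω)) +
      shannonEntropy p (fun ω => (A ω, l1 ω, l2 ω)) :=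
    TriangleAux.submod p hp hsum l3 A (fun ω => (l1 ω, l2 ω))
  -- chain for I(A:B) ≤ I(A:λ1)
  have S1 : shannonEntropy p (fun ω => (A ω, (l1 ω, l3 ω), B ω)) + shannonEntropy p B ≤
      shannonEntropy p (fun ω => (A ω, B ω)) +
      shannonEntropy p (fun ω => ((l1 ω, l3 ω), B ω)) :=
    TriangleAux.submod p hp hsum A (fun ω => (l1 ω, l3 ω)) B
  have S2 : shannonEntropy p (fun ω => (A ω, l1 ω, l3 ω)) ≤
      shannonEntropy p (fun ω => ((A ω, l1 ω, l3 ω), B ω)) :=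
    TriangleAux.mono p hp (fun ω => (A ω, l1 ω, l3 ω)) B
  have S3 : shannonEntropy p (fun ω => (l3 ω, l2 ω, A ω, l1 ω)) +
      shannonEntropy p (fun ω => (A ω, l1 ω)) ≤
      shannonEntropy p (fun ω => (l3 ω, A ω, l1 ω)) +
      shannonEntropy p (fun ω => (l2 ω, A ω, l1 ω)) :=
    TriangleAux.submod p hp hsum l3 l2 (fun ω => (A ω, l1 ω))
  -- chain for I(A:C) ≤ I(A:λ2)
  have T1 : shannonEntropy p (fun ω => (A ω, (l2 ω, l3 ω), C ω)) + shannonEntropy p C ≤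
      shannonEntropy p (fun ω => (A ω, C ω)) +
      shannonEntropy p (fun ω => ((l2 ω, l3 ω), C ω)) :=
    TriangleAux.submod p hp hsum A (fun ω => (l2 ω, l3 ω)) C
  have T2 : shannonEntropy p (fun ω => (A ω, l2 ω, l3 ω)) ≤
      shannonEntropy p (fun ω => ((A ω, l2 ω, l3 ω), C ω)) :=
    TriangleAux.mono p hp (fun ω => (A ω, l2 ω, l3 ω)) C
  have T3 : shannonEntropy p (fun ω => (l3 ω, l1 ω, A ω, l2 ω)) +
      shannonEntropy p (fun ω => (A ω, l2 ω)) ≤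
      shannonEntropy p (fun ω => (l3 ω, A ω, l2 ω)) +
      shannonEntropy p (fun ω => (l1 ω, A ω, l2 ω)) :=
    TriangleAux.submod p hp hsum l3 l1 (fun ω => (A ω, l2 ω))
  -- final step: I(A:λ1) + I(A:λ2) ≤ H(A)
  have S5 : shannonEntropy p (fun ω => (l2 ω, l1 ω, A ω)) + shannonEntropy p A ≤
      shannonEntropy p (fun ω => (l2 ω, A ω)) + shannonEntropy p (fun ω => (l1 ω, A ω)) :=
    TriangleAux.submod p hp hsum l2 l1 A
  linarith
end

section
/- Common-ancestor inequality with bounded randomness: let $A,B,C,\lambda$ be jointly distributed discrete random variables with $A,B,C$ conditionally independent given $\lambda$ (i.e., $H(A,B,C|\lambda)=H(A|\lambda)+H(B|\lambda)+H(C|\lambda)$) and $H(\lambda)\leq\mathcal{C}$. Then $H(A,B)+H(A,C)+H(B,C)-2H(A,B,C)\leq\mathcal{C}$. -/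
/-!
Write `D(A;B;C) = H(A,B) + H(A,C) + H(B,C) - 2 H(A,B,C)`. Submodularity of entropy, applied
with the conditioning variables `(A,B)` and `(A,C)`, together with monotonicity shows that
adjoining `λ` to every variable does not decrease `D`:
`D(A;B;C) ≤ H(A,B,λ) + H(A,C,λ) + H(B,C,λ) - 2 H(A,B,C,λ)`.
Submodularity conditioned on `λ` bounds the right-hand side by
`2 (H(A,λ) + H(B,λ) + H(C,λ)) - 3 H(λ) - 2 H(A,B,C,λ)`, which conditional independence turns
into `H(λ)`.

Submodularity is subadditivity of entropy on each fibre of the conditioning variable, and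
subadditivity follows from the log-sum inequality.
-/

open Finset

namespace Real

lemma sub_le_mul_log_sub_mul_log {a b : ℝ} (ha : 0 ≤ a) (hb : 0 ≤ b) (hab : b = 0 → a = 0) :
    a - b ≤ a * log a - a * log b := by
  rcases ha.eq_or_lt with rfl | ha
  · simpa using hb
  have hb : 0 < b := hb.lt_of_ne' fun h => ha.ne' (hab h)
  have key := mul_le_mul_of_nonneg_left (log_le_sub_one_of_pos (div_pos hb ha)) ha.le
  rw [log_div hb.ne' ha.ne', mul_sub_one, mul_div_cancel₀ _ ha.ne'] at key
  linarith

theorem log_sum_inequality {ι : Type*} (s : Finset ι) {a b : ι → ℝ} (ha : ∀ i ∈ s, 0 ≤ a i)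
    (hb : ∀ i ∈ s, 0 ≤ b i) (hab : ∀ i ∈ s, b i = 0 → a i = 0) :
    (∑ i ∈ s, a i) * log (∑ i ∈ s, a i) - (∑ i ∈ s, a i) * log (∑ i ∈ s, b i) ≤
      ∑ i ∈ s, (a i * log (a i) - a i * log (b i)) := by
  set A := ∑ i ∈ s, a i
  set B := ∑ i ∈ s, b i
  obtain hA | hA : A = 0 ∨ 0 < A := (sum_nonneg ha).eq_or_lt'
  · have h0 : ∀ i ∈ s, a i = 0 := (sum_eq_zero_iff_of_nonneg ha).1 hA
    rw [hA, sum_eq_zero fun i hi => by simp [h0 i hi]]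
    simp
  have hB : 0 < B := (sum_nonneg hb).lt_of_ne' fun hB => hA.ne' <|
    sum_eq_zero fun i hi => hab i hi ((sum_eq_zero_iff_of_nonneg hb).1 hB i hi)
  -- Gibbs' inequality against the rescaled weights `b i * (A / B)`, which have total mass `A`.
  set c := A / B
  have hc : 0 < c := div_pos hA hB
  calc A * log A - A * log B = A * log c + (A - B * c) := by
        rw [log_div hA.ne' hB.ne', mul_div_cancel₀ _ hB.ne']; ring
    _ = ∑ i ∈ s, (a i * log c + (a i - b i * c)) := by
        rw [sum_add_distrib, sum_sub_distrib, ← sum_mul, ← sum_mul]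
    _ ≤ ∑ i ∈ s, (a i * log (a i) - a i * log (b i)) := sum_le_sum fun i hi => by
        have gibbs := sub_le_mul_log_sub_mul_log (ha i hi) (mul_nonneg (hb i hi) hc.le)
          fun h => hab i hi ((mul_eq_zero.1 h).resolve_right hc.ne')
        rcases eq_or_ne (b i) 0 with hbi | hbi
        · simp [hab i hi hbi, hbi] at gibbs ⊢
        · rw [log_mul hbi hc.ne'] at gibbs
          linarith

theorem sum_negMulLog_add_negMulLog_sum_le {α β : Type*} [Fintype α] [Fintype β]
    (M : α → β → ℝ) (hM : ∀ x y, 0 ≤ M x y) :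
    ∑ x, ∑ y, negMulLog (M x y) + negMulLog (∑ x, ∑ y, M x y) ≤
      ∑ x, negMulLog (∑ y, M x y) + ∑ y, negMulLog (∑ x, M x y) := by
  have column (y : β) := log_sum_inequality univ (fun x _ => hM x y)
    (fun x _ => sum_nonneg fun y' _ => hM x y') fun x _ h =>
      le_antisymm (h ▸ single_le_sum (fun y' _ => hM x y') (mem_univ y)) (hM x y)
  have rows : ∑ y, ∑ x, M x y * log (∑ y', M x y') =
      ∑ x, (∑ y, M x y) * log (∑ y, M x y) := by
    rw [sum_comm]
    simp only [sum_mul]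
  have total := sum_le_sum fun y (_ : y ∈ univ) => column y
  rw [sum_sub_distrib, ← sum_mul, sum_comm (f := fun y x => M x y)] at total
  simp only [sum_sub_distrib, rows] at total
  rw [sum_comm (f := fun y x => M x y * log (M x y))] at total
  simp only [negMulLog, neg_mul, sum_neg_distrib]
  linarith

lemma negMulLog_add_le {a b : ℝ} (ha : 0 ≤ a) (hb : 0 ≤ b) :
    negMulLog (a + b) ≤ negMulLog a + negMulLog b := by
  have mul_log_le {u v : ℝ} (hu : 0 ≤ u) (hv : 0 ≤ v) : u * log u ≤ u * log (u + v) := by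
    rcases hu.eq_or_lt with rfl | hu
    · simp
    · exact mul_le_mul_of_nonneg_left (log_le_log hu (le_add_of_nonneg_right hv)) hu.le
  have ha' := mul_log_le ha hb
  have hb' := mul_log_le hb ha
  rw [add_comm b] at hb'
  simp only [negMulLog, neg_mul, add_mul]
  linarith

lemma negMulLog_sum_le {ι : Type*} (s : Finset ι) {a : ι → ℝ} (ha : ∀ i ∈ s, 0 ≤ a i) :
    negMulLog (∑ i ∈ s, a i) ≤ ∑ i ∈ s, negMulLog (a i) :=
  le_sum_of_subadditive_on_pred negMulLog (0 ≤ ·) (by simp)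
    (fun _ _ => negMulLog_add_le) (fun _ _ => add_nonneg) a ha

end Real

open Real

section

variable {Ω α β γ δ : Type*} [Fintype Ω] [DecidableEq α] [DecidableEq β] [DecidableEq γ]
  [DecidableEq δ] (p : Ω → ℝ)

def fiberMass (X : Ω → α) (x : α) : ℝ := ∑ ω with X ω = x, p ω

lemma shannonEntropy_eq_sum_negMulLog_fiberMass [Fintype α] (X : Ω → α) :
    shannonEntropy p X = ∑ x, negMulLog (fiberMass p X x) := rfl

lemma fiberMass_comp [Fintype α] (X : Ω → α) (f : α → β) (y : β) :
    fiberMass p (fun ω => f (X ω)) y = ∑ x with f x = y, fiberMass p X x := by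
  simp only [fiberMass, sum_fiberwise_eq_sum_filter, mem_filter_univ]

lemma sum_fiberMass_pair_left [Fintype α] (X : Ω → α) (Y : Ω → β) (y : β) :
    ∑ x, fiberMass p (fun ω => (X ω, Y ω)) (x, y) = fiberMass p Y y := by
  simp only [fiberMass, Prod.mk.injEq]
  rw [← sum_fiberwise (univ.filter fun ω => Y ω = y) X]
  simp only [filter_filter, and_comm]

lemma sum_fiberMass_triple_mid [Fintype β] (X : Ω → α) (Y : Ω → β) (Z : Ω → γ) (x : α)
    (z : γ) :
    ∑ y, fiberMass p (fun ω => (X ω, Y ω, Z ω)) (x, y, z) =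
      fiberMass p (fun ω => (X ω, Z ω)) (x, z) := by
  simp only [fiberMass, Prod.mk.injEq]
  rw [← sum_fiberwise (univ.filter fun ω => X ω = x ∧ Z ω = z) Y]
  simp only [filter_filter, and_comm, and_left_comm]

variable {p} (hp : ∀ ω, 0 ≤ p ω)
include hp

lemma fiberMass_nonneg (X : Ω → α) (x : α) : 0 ≤ fiberMass p X x :=
  sum_nonneg fun ω _ => hp ω

variable [Fintype α] [Fintype β] [Fintype γ] [Fintype δ]

theorem shannonEntropy_comp_le (X : Ω → α) (f : α → β) :
    shannonEntropy p (fun ω => f (X ω)) ≤ shannonEntropy p X := by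
  simp only [shannonEntropy_eq_sum_negMulLog_fiberMass, fiberMass_comp]
  calc ∑ y, negMulLog (∑ x with f x = y, fiberMass p X x)
      ≤ ∑ y, ∑ x with f x = y, negMulLog (fiberMass p X x) :=
        sum_le_sum fun y _ => negMulLog_sum_le _ fun x _ => fiberMass_nonneg hp X x
    _ = ∑ x, negMulLog (fiberMass p X x) := sum_fiberwise _ _ _

theorem shannonEntropy_triple_add_le (X : Ω → α) (Y : Ω → β) (Z : Ω → γ) :
    shannonEntropy p (fun ω => (X ω, Y ω, Z ω)) + shannonEntropy p Z ≤
      shannonEntropy p (fun ω => (X ω, Z ω)) + shannonEntropy p (fun ω => (Y ω, Z ω)) := by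
  have fiber (z : γ) := sum_negMulLog_add_negMulLog_sum_le
    (fun y x => fiberMass p (fun ω => (X ω, Y ω, Z ω)) (x, y, z))
    fun _ _ => fiberMass_nonneg hp _ _
  simp only [sum_fiberMass_pair_left, sum_fiberMass_triple_mid] at fiber
  simp only [shannonEntropy_eq_sum_negMulLog_fiberMass, Fintype.sum_prod_type_right,
    ← sum_add_distrib]
  exact sum_le_sum fun z _ => (fiber z).trans_eq (add_comm _ _)

theorem shannonEntropy_pairs_sub_triple_le_adjoin (A : Ω → α) (B : Ω → β) (C : Ω → γ)
    (L : Ω → δ) :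
    shannonEntropy p (fun ω => (A ω, B ω)) + shannonEntropy p (fun ω => (A ω, C ω)) +
        shannonEntropy p (fun ω => (B ω, C ω)) - 2 * shannonEntropy p (fun ω => (A ω, B ω, C ω)) ≤
      shannonEntropy p (fun ω => (A ω, B ω, L ω)) + shannonEntropy p (fun ω => (A ω, C ω, L ω)) +
        shannonEntropy p (fun ω => (B ω, C ω, L ω)) -
          2 * shannonEntropy p (fun ω => (A ω, B ω, C ω, L ω)) := by
  have hAB := shannonEntropy_triple_add_le hp C L fun ω => (A ω, B ω)
  have hAC := shannonEntropy_triple_add_le hp B L fun ω => (A ω, C ω)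
  have h₁ : shannonEntropy p (fun ω => (A ω, B ω, C ω, L ω)) ≤
      shannonEntropy p (fun ω => (C ω, L ω, A ω, B ω)) :=
    shannonEntropy_comp_le hp (fun ω => (C ω, L ω, A ω, B ω)) fun t => (t.2.2.1, t.2.2.2, t.1, t.2.1)
  have h₂ : shannonEntropy p (fun ω => (C ω, A ω, B ω)) ≤
      shannonEntropy p (fun ω => (A ω, B ω, C ω)) :=
    shannonEntropy_comp_le hp (fun ω => (A ω, B ω, C ω)) fun t => (t.2.2, t.1, t.2.1)
  have h₃ : shannonEntropy p (fun ω => (L ω, A ω, B ω)) ≤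
      shannonEntropy p (fun ω => (A ω, B ω, L ω)) :=
    shannonEntropy_comp_le hp (fun ω => (A ω, B ω, L ω)) fun t => (t.2.2, t.1, t.2.1)
  have h₄ : shannonEntropy p (fun ω => (A ω, B ω, C ω, L ω)) ≤
      shannonEntropy p (fun ω => (B ω, L ω, A ω, C ω)) :=
    shannonEntropy_comp_le hp (fun ω => (B ω, L ω, A ω, C ω)) fun t => (t.2.2.1, t.1, t.2.2.2, t.2.1)
  have h₅ : shannonEntropy p (fun ω => (B ω, A ω, C ω)) ≤
      shannonEntropy p (fun ω => (A ω, B ω, C ω)) :=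
    shannonEntropy_comp_le hp (fun ω => (A ω, B ω, C ω)) fun t => (t.2.1, t.1, t.2.2)
  have h₆ : shannonEntropy p (fun ω => (L ω, A ω, C ω)) ≤
      shannonEntropy p (fun ω => (A ω, C ω, L ω)) :=
    shannonEntropy_comp_le hp (fun ω => (A ω, C ω, L ω)) fun t => (t.2.2, t.1, t.2.1)
  have h₇ : shannonEntropy p (fun ω => (B ω, C ω)) ≤
      shannonEntropy p (fun ω => (B ω, C ω, L ω)) :=
    shannonEntropy_comp_le hp (fun ω => (B ω, C ω, L ω)) fun t => (t.1, t.2.1)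
  linarith

end

theorem common_ancestor_bounded_general {Ω α β γ δ : Type*} [Fintype Ω]
    [Fintype α] [DecidableEq α] [Fintype β] [DecidableEq β] [Fintype γ] [DecidableEq γ]
    [Fintype δ] [DecidableEq δ]
    (p : Ω → ℝ) (hp : ∀ ω, 0 ≤ p ω)
    (A : Ω → α) (B : Ω → β) (C : Ω → γ) (lam : Ω → δ) (𝒞 : ℝ)
    (hCI : shannonEntropy p (fun ω => (A ω, B ω, C ω, lam ω)) - shannonEntropy p lam =
      (shannonEntropy p (fun ω => (A ω, lam ω)) - shannonEntropy p lam) +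
      (shannonEntropy p (fun ω => (B ω, lam ω)) - shannonEntropy p lam) +
      (shannonEntropy p (fun ω => (C ω, lam ω)) - shannonEntropy p lam))
    (hlam : shannonEntropy p lam ≤ 𝒞) :
    shannonEntropy p (fun ω => (A ω, B ω)) +
      shannonEntropy p (fun ω => (A ω, C ω)) +
      shannonEntropy p (fun ω => (B ω, C ω)) -
      2 * shannonEntropy p (fun ω => (A ω, B ω, C ω)) ≤ 𝒞 := by
  have adjoin := shannonEntropy_pairs_sub_triple_le_adjoin hp A B C lam
  have hAB := shannonEntropy_triple_add_le hp A B lam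
  have hAC := shannonEntropy_triple_add_le hp A C lam
  have hBC := shannonEntropy_triple_add_le hp B C lam
  linarith

/-- Common-ancestor inequality with bounded randomness: if `A, B, C` are conditionally
independent given `λ` (i.e. `H(A,B,C|λ) = H(A|λ) + H(B|λ) + H(C|λ)`) and `H(λ) ≤ 𝒞`,
then `H(A,B) + H(A,C) + H(B,C) - 2 H(A,B,C) ≤ 𝒞`. -/
theorem common_ancestor_bounded {Ω α β γ δ : Type*} [Fintype Ω]
    [Fintype α] [DecidableEq α] [Fintype β] [DecidableEq β] [Fintype γ] [DecidableEq γ]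
    [Fintype δ] [DecidableEq δ]
    (p : Ω → ℝ) (hp : ∀ ω, 0 ≤ p ω) (hsum : ∑ ω, p ω = 1)
    (A : Ω → α) (B : Ω → β) (C : Ω → γ) (lam : Ω → δ) (𝒞 : ℝ)
    (hCI : shannonEntropy p (fun ω => (A ω, B ω, C ω, lam ω)) - shannonEntropy p lam =
      (shannonEntropy p (fun ω => (A ω, lam ω)) - shannonEntropy p lam) +
      (shannonEntropy p (fun ω => (B ω, lam ω)) - shannonEntropy p lam) +
      (shannonEntropy p (fun ω => (C ω, lam ω)) - shannonEntropy p lam))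
    (hlam : shannonEntropy p lam ≤ 𝒞) :
    shannonEntropy p (fun ω => (A ω, B ω)) +
      shannonEntropy p (fun ω => (A ω, C ω)) +
      shannonEntropy p (fun ω => (B ω, C ω)) -
      2 * shannonEntropy p (fun ω => (A ω, B ω, C ω)) ≤ 𝒞 :=
  common_ancestor_bounded_general p hp A B C lam 𝒞 hCI hlam
end
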